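/- arXiv:2101.00279 — 4 statements merged into one kernel-verified Lean document; each statement's English description precedes it below -/
import Mathlib

section
/- Let h: ℕ → [0, ∞) be a multiplicative function such that (i) h(p) ≤ 2 and h(p^r) ≤ h(p) for all primes p and all r ≥ 2, and (ii) for some constant c > 0, ∑_{p ≤ x} h(p) ≪ x^{1/k} / exp(c √(log x)). Then there exists δ > 0 such that ∑_{n ≤ x} h(n) ≪ x^{1/k} / exp(δ √(log x)). -/
/-!
Rankin's trick. Put `θ = 1/k`, `σ = θ - η` with `η = c / (2 √(log x))`. Then
`∑_{n ≤ x} h(n) ≤ x^σ ∑_{n ≤ x} h(n) n^{-σ} ≤ x^σ ∏_{p ≤ x} (1 + K h(p) p^{-σ})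
  ≤ x^σ exp (K ∑_{p ≤ x} h(p) p^{-σ})`,
where `K = (1 - 2^{-θ/2})⁻¹` bounds the geometric tail of every Euler factor since
`h(p^r) ≤ h(p)`. The primes in a dyadic block `[2^j, 2^{j+1})` contribute
`≪ 2^{ηj} exp(-c √(j log 2)) ≤ exp(-(c/2) √(j log 2))`, because `j log 2 ≤ log x`; this is
summable in `j`, so the prime sum is bounded independently of `x`, and
`x^σ = x^θ exp(-(c/2) √(log x))` gives `δ = c/2`.
-/

open Finset Filter Asymptotics Real

lemma summable_exp_neg_mul_sqrt {b : ℝ} (hb : 0 < b) :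
    Summable fun j : ℕ => exp (-(b * √j)) := by
  refine (summable_nat_add_iff 1).mp ?_
  have hsum : Summable fun j : ℕ => 24 / b ^ 4 * (1 / ((j + 1 : ℕ) : ℝ) ^ 2) :=
    ((summable_nat_add_iff 1).mpr (Real.summable_one_div_nat_pow.mpr one_lt_two)).mul_left _
  refine Summable.of_nonneg_of_le (fun _ => (exp_pos _).le) (fun j => ?_) hsum
  set s := b * √((j + 1 : ℕ) : ℝ)
  have hs : 0 < s := by positivity
  have hs4 : s ^ 4 = b ^ 4 * ((j + 1 : ℕ) : ℝ) ^ 2 := by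
    rw [mul_pow, show √((j + 1 : ℕ) : ℝ) ^ 4 = (√((j + 1 : ℕ) : ℝ) ^ 2) ^ 2 by ring,
      sq_sqrt (Nat.cast_nonneg _)]
  have h4 : s ^ 4 / 24 ≤ exp s := by simpa [Nat.factorial] using pow_div_factorial_le_exp _ hs.le 4
  rw [exp_neg, inv_le_comm₀ (exp_pos _) (by positivity)]
  refine le_trans (le_of_eq ?_) h4
  rw [hs4]
  field_simp

lemma summable_and_tsum_le_of_le_geometric {g : ℕ → ℝ} {b r : ℝ} (hg : ∀ i, 0 ≤ g i)
    (hr0 : 0 ≤ r) (hr1 : r < 1) (hgr : ∀ i, g (i + 1) ≤ b * r ^ (i + 1)) :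
    Summable g ∧ ∑' i, g i ≤ g 0 + b * r / (1 - r) := by
  have hgeom : HasSum (fun i => b * r ^ (i + 1)) (b * r / (1 - r)) := by
    rw [div_eq_mul_inv, show (fun i => b * r ^ (i + 1)) = fun i => b * r * r ^ i by
      funext i; ring]
    exact (hasSum_geometric_of_lt_one hr0 hr1).mul_left (b * r)
  have hsum : Summable fun i => g (i + 1) :=
    hgeom.summable.of_nonneg_of_le (fun i => hg _) hgr
  have hsum' : Summable g := (summable_nat_add_iff 1).mp hsum
  refine ⟨hsum', ?_⟩
  rw [hsum'.tsum_eq_zero_add]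
  exact add_le_add_right (hasSum_le hgr hsum.hasSum hgeom) _

lemma sum_Icc_le_prod_tsum_prime_pow {f : ℕ → ℝ} (hf : ∀ n, 0 ≤ f n) (hf1 : f 1 = 1)
    (hmul : ∀ m n, m.Coprime n → f (m * n) = f m * f n)
    (hsum : ∀ p, p.Prime → Summable fun i => f (p ^ i)) (N : ℕ) :
    ∑ n ∈ Icc 1 N, f n ≤ ∏ p ∈ (Icc 1 N).filter Nat.Prime, ∑' i, f (p ^ i) := by
  classical
  have hfac := (EulerProduct.summable_and_hasSum_factoredNumbers_prod_filter_prime_tsum hf1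
    (hmul _ _) (fun hp => by simpa only [norm_of_nonneg (hf _)] using hsum _ hp) (Icc 1 N)).2
  have hmem : ∀ n ∈ Icc 1 N, n ∈ Nat.factoredNumbers (Icc 1 N) := fun n hn => by
    obtain ⟨hn1, hnN⟩ := mem_Icc.mp hn
    refine Nat.mem_factoredNumbers_of_primeFactors_subset (by omega) fun p hp => ?_
    have hp' := Nat.mem_primeFactors.mp hp
    exact mem_Icc.mpr ⟨hp'.1.one_lt.le, (Nat.le_of_dvd (by omega) hp'.2.1).trans hnN⟩
  rw [← sum_subtype_of_mem f hmem]
  exact sum_le_hasSum _ (fun m _ => hf m) hfac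

lemma sum_Icc_mul_rpow_neg_le_exp {h : ℕ → ℝ} (hnonneg : ∀ n, 0 ≤ h n) (h1 : h 1 = 1)
    (hmult : ∀ m n, m.Coprime n → h (m * n) = h m * h n)
    (hpow : ∀ p, p.Prime → ∀ r, 2 ≤ r → h (p ^ r) ≤ h p) {σ : ℝ} (hσ : 0 < σ) (N : ℕ) :
    ∑ n ∈ Icc 1 N, h n * (n : ℝ) ^ (-σ) ≤
      exp ((1 - 2 ^ (-σ))⁻¹ * ∑ p ∈ (Icc 1 N).filter Nat.Prime, h p * (p : ℝ) ^ (-σ)) := by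
  set f : ℕ → ℝ := fun n => h n * (n : ℝ) ^ (-σ) with hfdef
  set K := (1 - (2 : ℝ) ^ (-σ))⁻¹
  have h2 : (2 : ℝ) ^ (-σ) < 1 := rpow_lt_one_of_one_lt_of_neg one_lt_two (by linarith)
  have hf : ∀ n, 0 ≤ f n := fun n => mul_nonneg (hnonneg n) (by positivity)
  have hmul : ∀ m n, m.Coprime n → f (m * n) = f m * f n := by
    intro m n hmn
    simp only [hfdef]
    rw [hmult m n hmn, Nat.cast_mul, mul_rpow (Nat.cast_nonneg _) (Nat.cast_nonneg _)]
    ring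
  have hlocal : ∀ p, p.Prime → Summable (fun i => f (p ^ i)) ∧ ∑' i, f (p ^ i) ≤ 1 + K * f p := by
    intro p hp
    set r := (p : ℝ) ^ (-σ)
    have hr : r ≤ 2 ^ (-σ) :=
      Real.rpow_le_rpow_of_nonpos two_pos (by exact_mod_cast hp.two_le) (by linarith)
    have hgr : ∀ i, f (p ^ (i + 1)) ≤ h p * r ^ (i + 1) := by
      intro i
      simp only [hfdef]
      rw [Nat.cast_pow, ← rpow_pow_comm (Nat.cast_nonneg _)]
      gcongr
      rcases i with _ | i
      · simp
      · exact hpow p hp _ (by omega)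
    obtain ⟨hs, hle⟩ := summable_and_tsum_le_of_le_geometric (fun i => hf _) (by positivity)
      (hr.trans_lt h2) hgr
    refine ⟨hs, hle.trans ?_⟩
    simp only [hfdef, pow_zero, h1, Nat.cast_one, one_rpow, mul_one, div_eq_mul_inv]
    rw [mul_comm K]
    gcongr
    · exact mul_nonneg (hnonneg p) (by positivity)
    · exact inv_anti₀ (by linarith) (by linarith)
  calc ∑ n ∈ Icc 1 N, f n ≤ ∏ p ∈ (Icc 1 N).filter Nat.Prime, ∑' i, f (p ^ i) :=
        sum_Icc_le_prod_tsum_prime_pow hf (by simp [hfdef, h1]) hmul (fun p hp => (hlocal p hp).1) N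
    _ ≤ ∏ p ∈ (Icc 1 N).filter Nat.Prime, exp (K * f p) := by
        refine prod_le_prod (fun p _ => tsum_nonneg fun i => hf _) fun p hp => ?_
        linarith [(hlocal p (mem_filter.mp hp).2).2, add_one_le_exp (K * f p)]
    _ = exp (K * ∑ p ∈ (Icc 1 N).filter Nat.Prime, f p) := by rw [mul_sum, exp_sum]

lemma sum_Icc_floor_le_rpow_mul_sum {a : ℕ → ℝ} (ha : ∀ n, 0 ≤ a n) {σ x : ℝ} (hσ : 0 ≤ σ) :
    ∑ n ∈ Icc 1 ⌊x⌋₊, a n ≤ x ^ σ * ∑ n ∈ Icc 1 ⌊x⌋₊, a n * (n : ℝ) ^ (-σ) := by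
  rw [mul_sum]
  refine sum_le_sum fun n hn => ?_
  obtain ⟨hn1, hnx⟩ := mem_Icc.mp hn
  have hn0 : (0 : ℝ) < n := by exact_mod_cast hn1
  calc a n = a n * ((n : ℝ) ^ σ * (n : ℝ) ^ (-σ)) := by
        rw [← rpow_add hn0, add_neg_cancel, rpow_zero, mul_one]
    _ ≤ a n * (x ^ σ * (n : ℝ) ^ (-σ)) := by
        gcongr
        · exact ha n
        · exact (Nat.le_floor_iff' (by omega)).mp hnx
    _ = x ^ σ * (a n * (n : ℝ) ^ (-σ)) := by ring

lemma two_pow_rpow_neg_mul_le {c θ η L : ℝ} {j : ℕ} (hc : 0 ≤ c) (hη : 0 ≤ η)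
    (hηL : 2 * η * √L ≤ c) (hjL : j * log 2 ≤ L) :
    ((2 : ℝ) ^ j) ^ (-(θ - η)) * (((2 : ℝ) ^ (j + 1)) ^ θ / exp (c * √(log (2 ^ (j + 1)))))
      ≤ 2 ^ θ * exp (-(c / 2 * √(log 2) * √j)) := by
  set t := j * log 2 with ht
  have ht0 : 0 ≤ t := by positivity
  have hlog : log ((2 : ℝ) ^ (j + 1)) = t + log 2 := by rw [log_pow]; push_cast; ring
  have hsqrt : c / 2 * √(log 2) * √j = c / 2 * √t := by
    rw [ht, sqrt_mul (Nat.cast_nonneg j), mul_comm (√(j : ℝ)), mul_assoc]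
  have hηt : η * t ≤ c / 2 * √t := by
    have : √t * √t ≤ √t * √L := by gcongr
    rw [mul_self_sqrt ht0] at this
    nlinarith [sqrt_nonneg t]
  have hct : c * √t ≤ c * √(t + log 2) := by gcongr; linarith [log_pos one_lt_two]
  rw [rpow_def_of_pos (by positivity), rpow_def_of_pos (by positivity),
    rpow_def_of_pos two_pos, hlog, log_pow, div_eq_mul_inv, ← exp_neg, hsqrt,
    ← exp_add, ← exp_add, ← exp_add, exp_le_exp]
  nlinarith

lemma sum_filter_log_eq_mul_rpow_neg_le {P : ℕ → Prop} [DecidablePred P] {a : ℕ → ℝ}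
    (ha : ∀ n, 0 ≤ a n) {C c θ η x : ℝ} (hc : 0 < c) (hη : 0 ≤ η) (hηθ : η ≤ θ)
    (hηx : 2 * η * √(log x) ≤ c)
    (hS : ∀ y ≥ 1, ∑ n ∈ (Icc 1 ⌊y⌋₊).filter P, a n ≤ C * (y ^ θ / exp (c * √(log y))))
    (j : ℕ) :
    ∑ n ∈ ((Icc 1 ⌊x⌋₊).filter P).filter (Nat.log 2 · = j), a n * (n : ℝ) ^ (-(θ - η))
      ≤ 2 ^ θ * C * exp (-(c / 2 * √(log 2) * √j)) := by
  have hC : 0 ≤ C := by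
    simpa using (sum_nonneg fun n _ => ha n).trans (hS 1 le_rfl)
  set F := ((Icc 1 ⌊x⌋₊).filter P).filter (Nat.log 2 · = j)
  rcases F.eq_empty_or_nonempty with hempty | ⟨n₀, hn₀⟩
  · rw [hempty, sum_empty]; positivity
  have hmem : ∀ n ∈ F, n ≠ 0 ∧ n ≤ ⌊x⌋₊ ∧ P n ∧ 2 ^ j ≤ n ∧ n < 2 ^ (j + 1) := by
    intro n hn
    simp only [F, mem_filter, mem_Icc] at hn
    obtain ⟨⟨⟨hn1, hnx⟩, hP⟩, rfl⟩ := hn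
    exact ⟨by omega, hnx, hP, Nat.pow_log_le_self 2 (by omega),
      Nat.lt_pow_succ_log_self one_lt_two n⟩
  have hjx : j * log 2 ≤ log x := by
    obtain ⟨hn₀0, hn₀x, -, hjn₀, -⟩ := hmem n₀ hn₀
    have h2x : ((2 ^ j : ℕ) : ℝ) ≤ x :=
      (Nat.le_floor_iff' (by positivity)).mp (hjn₀.trans hn₀x)
    rw [← log_pow]
    exact log_le_log (by positivity) (by exact_mod_cast h2x)
  calc ∑ n ∈ F, a n * (n : ℝ) ^ (-(θ - η))
      ≤ ∑ n ∈ F, ((2 : ℝ) ^ j) ^ (-(θ - η)) * a n := by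
        refine sum_le_sum fun n hn => ?_
        obtain ⟨-, -, -, hjn, -⟩ := hmem n hn
        rw [mul_comm]
        exact mul_le_mul_of_nonneg_right
          (Real.rpow_le_rpow_of_nonpos (by positivity) (by exact_mod_cast hjn) (by linarith)) (ha n)
    _ ≤ ((2 : ℝ) ^ j) ^ (-(θ - η)) * ∑ n ∈ (Icc 1 ⌊(2 : ℝ) ^ (j + 1)⌋₊).filter P, a n := by
        rw [← mul_sum]
        refine mul_le_mul_of_nonneg_left
          (sum_le_sum_of_subset_of_nonneg (fun n hn => ?_) fun n _ _ => ha n) (by positivity)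
        obtain ⟨hn0, -, hP, -, hnj⟩ := hmem n hn
        rw [mem_filter, mem_Icc, show (2 : ℝ) ^ (j + 1) = ((2 ^ (j + 1) : ℕ) : ℝ) by push_cast; rfl,
          Nat.floor_natCast]
        exact ⟨⟨by omega, hnj.le⟩, hP⟩
    _ ≤ ((2 : ℝ) ^ j) ^ (-(θ - η)) *
          (C * (((2 : ℝ) ^ (j + 1)) ^ θ / exp (c * √(log (2 ^ (j + 1)))))) := by
        gcongr
        exact hS _ (one_le_pow₀ one_le_two)
    _ ≤ C * (2 ^ θ * exp (-(c / 2 * √(log 2) * √j))) := by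
        rw [mul_left_comm]
        exact mul_le_mul_of_nonneg_left (two_pow_rpow_neg_mul_le hc.le hη hηx hjx) hC
    _ = 2 ^ θ * C * exp (-(c / 2 * √(log 2) * √j)) := by ring

lemma sum_filter_mul_rpow_neg_le {P : ℕ → Prop} [DecidablePred P] {a : ℕ → ℝ}
    (ha : ∀ n, 0 ≤ a n) {C c θ η x : ℝ} (hc : 0 < c) (hη : 0 ≤ η) (hηθ : η ≤ θ)
    (hηx : 2 * η * √(log x) ≤ c)
    (hS : ∀ y ≥ 1, ∑ n ∈ (Icc 1 ⌊y⌋₊).filter P, a n ≤ C * (y ^ θ / exp (c * √(log y)))) :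
    ∑ n ∈ (Icc 1 ⌊x⌋₊).filter P, a n * (n : ℝ) ^ (-(θ - η))
      ≤ 2 ^ θ * C * ∑' j : ℕ, exp (-(c / 2 * √(log 2) * √j)) := by
  have hC : 0 ≤ C := by
    simpa using (sum_nonneg fun n _ => ha n).trans (hS 1 le_rfl)
  have hlog : ∀ n ∈ (Icc 1 ⌊x⌋₊).filter P, Nat.log 2 n ∈ range (⌊x⌋₊ + 1) := fun n hn =>
    mem_range_succ_iff.mpr ((Nat.log_le_self 2 n).trans (mem_Icc.mp (mem_filter.mp hn).1).2)
  rw [← sum_fiberwise_of_maps_to hlog]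
  refine (sum_le_sum fun j _ => sum_filter_log_eq_mul_rpow_neg_le ha hc hη hηθ hηx hS j).trans ?_
  rw [← mul_sum]
  exact mul_le_mul_of_nonneg_left (Summable.sum_le_tsum _ (fun _ _ => (exp_pos _).le)
    (summable_exp_neg_mul_sqrt (by positivity))) (by positivity)

lemma exists_forall_le_mul_of_isBigO {u v : ℝ → ℝ} {a : ℝ} (huv : u =O[atTop] v)
    (hu : MonotoneOn u (Set.Ici a)) (hv : ∀ b, ∃ ε > 0, ∀ y ∈ Set.Icc a b, ε ≤ v y) :
    ∃ C, ∀ y ≥ a, u y ≤ C * v y := by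
  obtain ⟨C₀, hC₀⟩ := huv.bound
  obtain ⟨X, hX⟩ := eventually_atTop.mp hC₀
  set X' := max X a
  obtain ⟨ε, hε, hεv⟩ := hv X'
  refine ⟨max C₀ (max (u X') 0 / ε), fun y hy => ?_⟩
  have hvy : 0 < v y := by
    obtain ⟨ε', hε', hε'v⟩ := hv y
    exact hε'.trans_le (hε'v y ⟨hy, le_rfl⟩)
  rcases le_total y X' with hyX | hXy
  · calc u y ≤ max (u X') 0 :=
          (hu hy (show a ≤ X' from le_max_right _ _) hyX).trans (le_max_left _ _)
      _ = max (u X') 0 / ε * ε := by field_simp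
      _ ≤ max (u X') 0 / ε * v y := by gcongr; exact hεv y ⟨hy, hyX⟩
      _ ≤ _ := by gcongr; exact le_max_right _ _
  · calc u y ≤ ‖u y‖ := le_norm_self _
      _ ≤ C₀ * v y := by simpa [norm_of_nonneg hvy.le] using hX y ((le_max_left _ _).trans hXy)
      _ ≤ _ := by gcongr; exact le_max_left _ _

lemma exists_pos_le_rpow_div_exp_mul_sqrt_log {θ c : ℝ} (hθ : 0 ≤ θ) (hc : 0 ≤ c) (b : ℝ) :
    ∃ ε > 0, ∀ y ∈ Set.Icc 1 b, ε ≤ y ^ θ / exp (c * √(log y)) := by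
  refine ⟨1 / exp (c * √(log b)), by positivity, fun y ⟨hy1, hyb⟩ => ?_⟩
  gcongr
  exact one_le_rpow hy1 hθ

lemma monotone_sum_filter_Icc_floor {P : ℕ → Prop} [DecidablePred P] {a : ℕ → ℝ}
    (ha : ∀ n, 0 ≤ a n) : Monotone fun y : ℝ => ∑ n ∈ (Icc 1 ⌊y⌋₊).filter P, a n :=
  fun _ _ hyz => sum_le_sum_of_subset_of_nonneg
    (filter_subset_filter _ (Icc_subset_Icc_right (Nat.floor_mono hyz))) fun n _ _ => ha n

lemma exists_sum_Icc_le_of_sum_prime_le {h : ℕ → ℝ} (hnonneg : ∀ n, 0 ≤ h n) (h1 : h 1 = 1)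
    (hmult : ∀ m n, m.Coprime n → h (m * n) = h m * h n)
    (hpow : ∀ p, p.Prime → ∀ r, 2 ≤ r → h (p ^ r) ≤ h p) {C c θ : ℝ} (hθ : 0 < θ) (hc : 0 < c)
    (hS : ∀ y ≥ 1, ∑ p ∈ (Icc 1 ⌊y⌋₊).filter Nat.Prime, h p ≤ C * (y ^ θ / exp (c * √(log y)))) :
    ∃ E, ∀ x ≥ exp ((c / θ) ^ 2),
      ∑ n ∈ Icc 1 ⌊x⌋₊, h n ≤ E * (x ^ θ / exp (c / 2 * √(log x))) := by
  set B := 2 ^ θ * C * ∑' j : ℕ, exp (-(c / 2 * √(log 2) * √j))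
  refine ⟨exp ((1 - 2 ^ (-(θ / 2)))⁻¹ * B), fun x hx => ?_⟩
  have hx0 : 0 < x := (exp_pos _).trans_le hx
  set L := log x
  have hL : (c / θ) ^ 2 ≤ L := by
    rw [← log_exp ((c / θ) ^ 2)]; exact log_le_log (exp_pos _) hx
  have hsL : c / θ ≤ √L := le_sqrt_of_sq_le hL
  have hsL0 : 0 < √L := (div_pos hc hθ).trans_le hsL
  set η := c / (2 * √L)
  have hη : 0 ≤ η := by positivity
  have hηθ : η ≤ θ / 2 := by
    rw [div_le_iff₀ hθ] at hsL
    rw [div_le_div_iff₀ (by positivity) two_pos]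
    nlinarith
  have hηL : 2 * η * √L = c := by simp only [η]; field_simp
  have hxσ : x ^ (θ - η) = x ^ θ / exp (c / 2 * √L) := by
    rw [rpow_sub hx0, rpow_def_of_pos hx0 η]
    congr 2
    have hsq : √L * √L = L := mul_self_sqrt ((sq_nonneg _).trans hL)
    linear_combination (√L / 2) * hηL - η * hsq
  have hK : (1 - (2 : ℝ) ^ (-(θ - η)))⁻¹ ≤ (1 - 2 ^ (-(θ / 2)))⁻¹ :=
    inv_anti₀ (sub_pos.mpr (rpow_lt_one_of_one_lt_of_neg one_lt_two (by linarith)))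
      (sub_le_sub_left (rpow_le_rpow_of_exponent_le one_le_two (by linarith)) _)
  have hT := sum_filter_mul_rpow_neg_le hnonneg hc hη (by linarith) hηL.le hS
  calc ∑ n ∈ Icc 1 ⌊x⌋₊, h n
      ≤ x ^ (θ - η) * ∑ n ∈ Icc 1 ⌊x⌋₊, h n * (n : ℝ) ^ (-(θ - η)) :=
        sum_Icc_floor_le_rpow_mul_sum hnonneg (by linarith)
    _ ≤ x ^ (θ - η) * exp ((1 - 2 ^ (-(θ - η)))⁻¹ *
          ∑ p ∈ (Icc 1 ⌊x⌋₊).filter Nat.Prime, h p * (p : ℝ) ^ (-(θ - η))) := by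
        gcongr
        exact sum_Icc_mul_rpow_neg_le_exp hnonneg h1 hmult hpow (by linarith) _
    _ ≤ x ^ (θ - η) * exp ((1 - 2 ^ (-(θ / 2)))⁻¹ * B) := by
        gcongr x ^ _ * exp ?_
        exact mul_le_mul hK hT (sum_nonneg fun p _ => mul_nonneg (hnonneg p) (by positivity))
          (inv_nonneg.mpr (sub_nonneg.mpr
            (rpow_le_one_of_one_le_of_nonpos one_le_two (by linarith))))
    _ = exp ((1 - 2 ^ (-(θ / 2)))⁻¹ * B) * (x ^ θ / exp (c / 2 * √L)) := by rw [hxσ]; ring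

theorem stmt1 (k : ℕ) (hk : 2 ≤ k) (h : ℕ → ℝ)
    (hnonneg : ∀ n, 0 ≤ h n) (h1 : h 1 = 1)
    (hmult : ∀ m n : ℕ, Nat.Coprime m n → h (m * n) = h m * h n)
    (hi : ∀ p : ℕ, p.Prime → h p ≤ 2 ∧ ∀ r : ℕ, 2 ≤ r → h (p ^ r) ≤ h p)
    (hii : ∃ c > (0:ℝ),
      (fun x : ℝ => ∑ p ∈ (Icc 1 ⌊x⌋₊).filter Nat.Prime, h p) =O[atTop]
        (fun x : ℝ => x ^ ((1:ℝ)/k) / Real.exp (c * Real.sqrt (Real.log x)))) :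
    ∃ δ > (0:ℝ),
      (fun x : ℝ => ∑ n ∈ Icc 1 ⌊x⌋₊, h n) =O[atTop]
        (fun x : ℝ => x ^ ((1:ℝ)/k) / Real.exp (δ * Real.sqrt (Real.log x))) := by
  obtain ⟨c, hc, hO⟩ := hii
  have hθ : (0 : ℝ) < 1 / k := by
    have : (0 : ℝ) < k := by exact_mod_cast (by omega : 0 < k)
    positivity
  obtain ⟨C, hC⟩ := exists_forall_le_mul_of_isBigO hO
    ((monotone_sum_filter_Icc_floor hnonneg).monotoneOn _)
    (exists_pos_le_rpow_div_exp_mul_sqrt_log hθ.le hc.le)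
  obtain ⟨E, hE⟩ := exists_sum_Icc_le_of_sum_prime_le hnonneg h1 hmult (fun p hp => (hi p hp).2)
    hθ hc hC
  refine ⟨c / 2, half_pos hc, IsBigO.of_bound E ?_⟩
  filter_upwards [eventually_ge_atTop (exp ((c / (1 / k)) ^ 2))] with x hx
  have hx0 : 0 < x := (exp_pos _).trans_le hx
  rw [norm_of_nonneg (sum_nonneg fun n _ => hnonneg n), norm_of_nonneg (by positivity)]
  exact hE x hx
end

section
/- Let g: ℕ → {-1, 1} be completely multiplicative, k ≥ 3 an odd integer, f = μ_k² · g, and h = f ∗ g^{-1} (Dirichlet convolution with the Dirichlet inverse of g). Then h(n) = μ(m) g(m) if n = m^k for some integer m, and h(n) = 0 otherwise. -/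
/-!
Complete multiplicativity gives `g d * g (n / d) = g n`, so `g` factors out of the convolution and
`h = g · (1_{k-free} ∗ μ)`. By Möbius inversion, `1_{k-free} ∗ μ` is the function `C` with
`C (m ^ k) = μ m`, vanishing off `k`-th powers, as soon as `∑_{m ^ k ∣ n} μ m = 1_{k-free} n`.
The `m` with `m ^ k ∣ n` are exactly the divisors of `r = ∏ p ^ ⌊v_p(n) / k⌋`, and `r = 1` iff `n`
is `k`-free. Finally `g (m ^ k) = g m ^ k = g m` because `k` is odd and `g m = ±1`.
-/

open Finset ArithmeticFunction
open scoped ArithmeticFunction.Moebius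

theorem Nat.exists_pow_dvd_iff_dvd {n k : ℕ} (hn : n ≠ 0) (hk : k ≠ 0) :
    ∃ r, ∀ m, m ^ k ∣ n ↔ m ∣ r := by
  set e := n.factorization.mapRange (· / k) (Nat.zero_div k)
  have he : ∀ p ∈ e.support, p.Prime := fun p hp =>
    Nat.prime_of_mem_primeFactors (Finsupp.support_mapRange hp)
  have hr : e.prod (· ^ ·) ≠ 0 :=
    Finset.prod_ne_zero_iff.mpr fun p hp => pow_ne_zero _ (he p hp).ne_zero
  refine ⟨e.prod (· ^ ·), fun m => ?_⟩
  rcases eq_or_ne m 0 with rfl | hm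
  · simp [zero_pow hk, hn, hr]
  rw [← Nat.factorization_le_iff_dvd (pow_ne_zero k hm) hn, ← Nat.factorization_le_iff_dvd hm hr,
    Nat.prod_pow_factorization_eq_self he, Finsupp.le_def, Finsupp.le_def]
  simp [e, Nat.factorization_pow, Nat.le_div_iff_mul_le (Nat.pos_of_ne_zero hk), mul_comm]

open scoped Classical in
theorem sum_moebius_filter_pow_dvd {n k : ℕ} (hn : n ≠ 0) (hk : k ≠ 0) :
    ∑ m ∈ n.divisors with m ^ k ∣ n, (μ m : ℤ) =
      if ∀ p : ℕ, p.Prime → ¬ p ^ k ∣ n then 1 else 0 := by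
  obtain ⟨r, hr⟩ := Nat.exists_pow_dvd_iff_dvd hn hk
  have hr0 : r ≠ 0 := by
    rintro rfl
    simpa [zero_pow hk, hn] using (hr 0).mpr dvd_rfl
  have hdivisors : {m ∈ n.divisors | m ^ k ∣ n} = r.divisors := by
    ext m
    simp only [mem_filter, Nat.mem_divisors, hr]
    exact ⟨fun h => ⟨h.2, hr0⟩, fun h => ⟨⟨(dvd_pow_self m hk).trans ((hr m).mpr h.1), hn⟩, h.1⟩⟩
  have hr_one : r = 1 ↔ ∀ p : ℕ, p.Prime → ¬ p ^ k ∣ n := by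
    simp only [Nat.eq_one_iff_not_exists_prime_dvd, hr]
  rw [hdivisors, ← coe_mul_zeta_apply, moebius_mul_coe_zeta, one_apply]
  exact if_congr hr_one rfl rfl

open scoped Classical in
noncomputable def moebiusRoot (k n : ℕ) : ℤ :=
  if h : ∃ m, n = m ^ k then μ h.choose else 0

theorem moebiusRoot_pow {k : ℕ} (hk : k ≠ 0) (m : ℕ) : moebiusRoot k (m ^ k) = μ m := by
  have h : ∃ m', m ^ k = m' ^ k := ⟨m, rfl⟩
  rw [moebiusRoot, dif_pos h, ← Nat.pow_left_injective hk h.choose_spec]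

theorem moebiusRoot_of_not_exists_pow {k n : ℕ} (hn : ¬ ∃ m, n = m ^ k) :
    moebiusRoot k n = 0 :=
  dif_neg hn

open scoped Classical in
theorem sum_divisors_moebiusRoot {n k : ℕ} (hn : n ≠ 0) (hk : k ≠ 0) :
    ∑ d ∈ n.divisors, moebiusRoot k d = if ∀ p : ℕ, p.Prime → ¬ p ^ k ∣ n then 1 else 0 := by
  rw [← sum_moebius_filter_pow_dvd hn hk]
  refine (sum_bij_ne_zero (fun m _ _ => m ^ k) ?_
    (fun _ _ _ _ _ _ h => Nat.pow_left_injective hk h) ?_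
    fun m _ _ => (moebiusRoot_pow hk m).symm).symm
  · intro m hm _
    exact Nat.mem_divisors.mpr ⟨(mem_filter.mp hm).2, hn⟩
  · intro d hd hd0
    obtain ⟨m, rfl⟩ : ∃ m, d = m ^ k := not_not.mp (mt moebiusRoot_of_not_exists_pow hd0)
    have hmk : m ^ k ∣ n := Nat.dvd_of_mem_divisors hd
    refine ⟨m, mem_filter.mpr ⟨Nat.mem_divisors.mpr ⟨(dvd_pow_self m hk).trans hmk, hn⟩, hmk⟩,
      ?_, rfl⟩
    rwa [← moebiusRoot_pow hk]

open scoped Classical in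
theorem sum_divisors_powFree_mul_moebius {R : Type*} [Ring R] {n k : ℕ} (hn : n ≠ 0)
    (hk : k ≠ 0) :
    ∑ d ∈ n.divisors, (if ∀ p : ℕ, p.Prime → ¬ p ^ k ∣ d then 1 else 0) * (μ (n / d) : R) =
      moebiusRoot k n := by
  have hsum : ∀ n > 0, ∑ d ∈ n.divisors, (moebiusRoot k d : R) =
      if ∀ p : ℕ, p.Prime → ¬ p ^ k ∣ n then 1 else 0 := fun n hn => by
    exact_mod_cast congrArg (Int.cast : ℤ → R) (sum_divisors_moebiusRoot hn.ne' hk)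
  rw [← sum_eq_iff_sum_mul_moebius_eq.mp hsum n (Nat.pos_of_ne_zero hn),
    Nat.sum_divisorsAntidiagonal'
      (fun a b => (μ a : R) * if ∀ p : ℕ, p.Prime → ¬ p ^ k ∣ b then 1 else 0)]
  exact sum_congr rfl fun _ _ => (Int.cast_commute _ _).eq.symm

theorem sum_divisors_mul_map_mul {R : Type*} [CommSemiring R] {g : ℕ → R}
    (hg : ∀ a b, g (a * b) = g a * g b) (a b : ℕ → R) (n : ℕ) :
    ∑ d ∈ n.divisors, a d * g d * (b (n / d) * g (n / d)) =
      g n * ∑ d ∈ n.divisors, a d * b (n / d) := by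
  rw [mul_sum]
  refine sum_congr rfl fun d hd => ?_
  have hgn : g n = g d * g (n / d) := by
    rw [← hg, Nat.mul_div_cancel' (Nat.dvd_of_mem_divisors hd)]
  rw [hgn]
  ring

theorem map_pow_of_map_mul {M R : Type*} [Monoid M] [Monoid R] {g : M → R}
    (hg : ∀ a b, g (a * b) = g a * g b) (a : M) {k : ℕ} (hk : k ≠ 0) : g (a ^ k) = g a ^ k := by
  obtain ⟨j, rfl⟩ := Nat.exists_eq_succ_of_ne_zero hk
  induction j with
  | zero => simp
  | succ j ih => rw [pow_succ, hg, ih j.succ_ne_zero, ← pow_succ]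

open scoped Classical in
theorem stmt7_general (k : ℕ) (hk : 3 ≤ k) (hkodd : Odd k) (g : ℕ → ℝ)
    (hgm : ∀ m n : ℕ, g (m * n) = g m * g n)
    (hgpm : ∀ n : ℕ, 0 < n → g n = 1 ∨ g n = -1)
    (f h : ℕ → ℝ)
    (hf : ∀ n : ℕ, f n = (if ∀ p : ℕ, p.Prime → ¬ p ^ k ∣ n then 1 else 0) * g n)
    (hh : ∀ n : ℕ, h n = ∑ d ∈ n.divisors,
      f d * ((ArithmeticFunction.moebius (n / d) : ℝ) * g (n / d))) :
    (∀ m : ℕ, h (m ^ k) = (ArithmeticFunction.moebius m : ℝ) * g m) ∧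
    (∀ n : ℕ, (¬ ∃ m : ℕ, n = m ^ k) → h n = 0) := by
  have hk0 : k ≠ 0 := by omega
  have h_eq : ∀ n, n ≠ 0 → h n = g n * moebiusRoot k n := fun n hn => by
    rw [← sum_divisors_powFree_mul_moebius hn hk0, hh]
    simp only [hf]
    exact sum_divisors_mul_map_mul hgm _ (fun d => (μ d : ℝ)) n
  refine ⟨fun m => ?_, fun n hn => ?_⟩
  · rcases eq_or_ne m 0 with rfl | hm
    · simp [hh, zero_pow hk0]
    have hg_pow : g (m ^ k) = g m := by
      rw [map_pow_of_map_mul hgm m hk0]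
      rcases hgpm m (Nat.pos_of_ne_zero hm) with hg | hg <;> simp [hg, hkodd.neg_one_pow]
    rw [h_eq _ (pow_ne_zero k hm), moebiusRoot_pow hk0, hg_pow, mul_comm]
  · have hn0 : n ≠ 0 := by
      rintro rfl
      exact hn ⟨0, (zero_pow hk0).symm⟩
    rw [h_eq n hn0, moebiusRoot_of_not_exists_pow hn, Int.cast_zero, mul_zero]

open scoped Classical in
theorem stmt7 (k : ℕ) (hk : 3 ≤ k) (hkodd : Odd k) (g : ℕ → ℝ)
    (hg1 : g 1 = 1) (hgm : ∀ m n : ℕ, g (m * n) = g m * g n)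
    (hgpm : ∀ n : ℕ, 0 < n → g n = 1 ∨ g n = -1)
    (f h : ℕ → ℝ)
    (hf : ∀ n : ℕ, f n = (if ∀ p : ℕ, p.Prime → ¬ p ^ k ∣ n then 1 else 0) * g n)
    (hh : ∀ n : ℕ, h n = ∑ d ∈ n.divisors,
      f d * ((ArithmeticFunction.moebius (n / d) : ℝ) * g (n / d))) :
    (∀ m : ℕ, h (m ^ k) = (ArithmeticFunction.moebius m : ℝ) * g m) ∧
    (∀ n : ℕ, (¬ ∃ m : ℕ, n = m ^ k) → h n = 0) :=
  stmt7_general k hk hkodd g hgm hgpm f h hf hh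
end

section
/- Let χ be a Dirichlet character modulo q (with q having ω(q) distinct prime factors) and let g: ℕ → {-1, 1} be the completely multiplicative function with g(n) = χ(n) for gcd(n, q) = 1 and g(p) = 1 for each prime p | q. If the partial sums of χ are bounded, then for every α > 0, ∑_{n ≤ x} g(n) ≪ x^α. Moreover limsup_{x→∞} |M_g(x)| / (log x)^{ω(q)} ≤ (max_{y ≥ 1} |M_χ(y)|/ω(q)!) ∏_{p | q} 1/(log p). -/
/-!
Since `g` is completely multiplicative, agrees with `χ` on integers prime to `q` and equals `1`
at the primes dividing `q`, it is the Dirichlet convolution `1_F * χ`, where `F` is the set of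
integers all of whose prime factors divide `q`. Hence `M_g(x) = ∑_{d ∈ F, d ≤ x} M_χ(x / d)`,
and `|M_g(x)|` is at most `sup |M_χ|` times the number of `d ∈ F` up to `x`. Adding the primes
of `q` one at a time, the elements `d = p^a m ≤ x` are counted by summing the count for the
remaining primes over `a ≤ log x / log p`; comparing this sum with an integral bounds the count
by `(log x + ∑ log p)^ω / (ω! ∏ log p)`, which gives both the `O(x^α)` bound and the
`limsup` bound.
-/

open Finset Filter Asymptotics
open scoped Topology
open Nat (factoredNumbers)

theorem pow_mul_le_add_pow_sub_pow {t c : ℝ} (ht : 0 ≤ t) (hc : 0 ≤ c) (k : ℕ) :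
    t ^ k * ((k + 1) * c) ≤ (t + c) ^ (k + 1) - t ^ (k + 1) := by
  have hgeom :
      ((k : ℝ) + 1) * t ^ k ≤ ∑ i ∈ range (k + 1), (c + t) ^ i * t ^ (k + 1 - 1 - i) :=
    calc ((k : ℝ) + 1) * t ^ k = ∑ i ∈ range (k + 1), t ^ i * t ^ (k + 1 - 1 - i) := by
          rw [sum_congr rfl fun i hi => by
            rw [← pow_add, Nat.add_sub_cancel, Nat.add_sub_cancel' (mem_range_succ_iff.1 hi)]]
          simp
      _ ≤ _ := sum_le_sum fun i _ => by gcongr; linarith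
  have hsum := geom_sum₂_mul_add c t (k + 1)
  rw [add_comm c t] at hsum hgeom
  nlinarith [mul_le_mul_of_nonneg_right hgeom hc]

theorem sum_range_sub_mul_pow_mul_le {u c : ℝ} (hc : 0 ≤ c) (k A : ℕ) (hA : A * c ≤ u) :
    (∑ a ∈ range (A + 1), (u - a * c) ^ k) * ((k + 1) * c) ≤ (u + c) ^ (k + 1) := by
  have hnonneg : ∀ a ≤ A, 0 ≤ u - a * c := fun a ha => by
    have : (a : ℝ) * c ≤ A * c := by gcongr
    linarith
  -- `h a = (u - (a - 1) c) ^ (k + 1)`, so the terms are bounded by a telescoping sum.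
  set h : ℕ → ℝ := fun a => (u - a * c + c) ^ (k + 1)
  calc (∑ a ∈ range (A + 1), (u - a * c) ^ k) * ((k + 1) * c)
      ≤ ∑ a ∈ range (A + 1), (h a - h (a + 1)) := by
        rw [sum_mul]
        refine sum_le_sum fun a ha => ?_
        have := pow_mul_le_add_pow_sub_pow (hnonneg a (mem_range_succ_iff.1 ha)) hc k
        simp only [h]
        push_cast
        ring_nf at this ⊢
        linarith
    _ = h 0 - h (A + 1) := sum_range_sub' h (A + 1)
    _ ≤ (u + c) ^ (k + 1) := by
        have : 0 ≤ h (A + 1) := by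
          simp only [h]; push_cast
          exact pow_nonneg (by linarith [hnonneg A le_rfl]) _
        simp only [h, Nat.cast_zero, zero_mul, sub_zero] at this ⊢
        linarith

theorem sum_comp_div_pow_le_of_le_log_add_pow {f : ℝ → ℝ} {C σ : ℝ} (hC : 0 ≤ C)
    (hσ : 0 ≤ σ) {k p : ℕ} (hp : 1 < p)
    (hf : ∀ y, 1 ≤ y → f y ≤ C * (Real.log y + σ) ^ k) {x : ℝ} (hx : 1 ≤ x) :
    ∑ a ∈ range (Nat.log p ⌊x⌋₊ + 1), f (x / p ^ a) ≤
      C * (Real.log x + σ + Real.log p) ^ (k + 1) / ((k + 1) * Real.log p) := by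
  set A := Nat.log p ⌊x⌋₊
  have hlogp : 0 < Real.log p := Real.log_pos (by exact_mod_cast hp)
  have hpow : ∀ a ≤ A, (p : ℝ) ^ a ≤ x := fun a ha =>
    calc (p : ℝ) ^ a ≤ p ^ A := pow_le_pow_right₀ (by exact_mod_cast hp.le) ha
      _ ≤ ⌊x⌋₊ := by exact_mod_cast Nat.pow_log_le_self p (Nat.floor_pos.2 hx).ne'
      _ ≤ x := Nat.floor_le (by linarith)
  have hA : A * Real.log p ≤ Real.log x + σ := by
    rw [← Real.log_pow]
    linarith [Real.log_le_log (by positivity) (hpow A le_rfl)]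
  calc ∑ a ∈ range (A + 1), f (x / p ^ a)
      ≤ ∑ a ∈ range (A + 1), C * (Real.log x + σ - a * Real.log p) ^ k := by
        refine sum_le_sum fun a ha => ?_
        have hpa := hpow a (mem_range_succ_iff.1 ha)
        have hpa0 : (0 : ℝ) < p ^ a := by positivity
        calc f (x / p ^ a) ≤ C * (Real.log (x / p ^ a) + σ) ^ k := hf _ ((one_le_div hpa0).2 hpa)
          _ = _ := by rw [Real.log_div (by positivity) hpa0.ne', Real.log_pow]; ring
    _ = C * ((∑ a ∈ range (A + 1), (Real.log x + σ - a * Real.log p) ^ k) *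
          ((k + 1) * Real.log p)) / ((k + 1) * Real.log p) := by
        rw [← mul_sum, mul_div_assoc, mul_div_cancel_right₀ _ (by positivity)]
    _ ≤ C * (Real.log x + σ + Real.log p) ^ (k + 1) / ((k + 1) * Real.log p) := by
        gcongr
        exact sum_range_sub_mul_pow_mul_le hlogp.le k A hA

theorem card_factoredNumbers_Icc_insert_le {s : Finset ℕ} {p : ℕ} (hp : p.Prime) (hps : p ∉ s)
    (N : ℕ) :
    #{d ∈ Icc 1 N | d ∈ factoredNumbers (insert p s)} ≤
      ∑ a ∈ range (Nat.log p N + 1), #{m ∈ Icc 1 (N / p ^ a) | m ∈ factoredNumbers s} := by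
  calc #{d ∈ Icc 1 N | d ∈ factoredNumbers (insert p s)}
      ≤ #((range (Nat.log p N + 1)).biUnion fun a =>
          {m ∈ Icc 1 (N / p ^ a) | m ∈ factoredNumbers s}.image (p ^ a * ·)) := by
        refine card_le_card fun d hd => ?_
        obtain ⟨hdN, hd⟩ := mem_filter.1 hd
        obtain ⟨⟨a, m, hm⟩, had⟩ :=
          (Nat.equivProdNatFactoredNumbers hp hps).surjective ⟨d, hd⟩
        obtain rfl : p ^ a * m = d := congrArg Subtype.val had
        have hm0 : m ≠ 0 := Nat.ne_zero_of_mem_factoredNumbers hm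
        have hpa : p ^ a ≤ N :=
          (Nat.le_mul_of_pos_right _ (Nat.pos_of_ne_zero hm0)).trans (mem_Icc.1 hdN).2
        simp only [mem_biUnion, mem_range, mem_image, mem_filter, mem_Icc]
        refine ⟨a, Nat.lt_succ_of_le (Nat.le_log_of_pow_le hp.one_lt hpa), m,
          ⟨⟨Nat.one_le_iff_ne_zero.2 hm0, ?_⟩, hm⟩, rfl⟩
        exact (Nat.le_div_iff_mul_le (pow_pos hp.pos a)).2 (by linarith [(mem_Icc.1 hdN).2])
    _ ≤ ∑ a ∈ range (Nat.log p N + 1),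
          #({m ∈ Icc 1 (N / p ^ a) | m ∈ factoredNumbers s}.image (p ^ a * ·)) :=
        card_biUnion_le
    _ ≤ _ := sum_le_sum fun a _ => card_image_le

theorem card_factoredNumbers_Icc_le {s : Finset ℕ} (hs : ∀ p ∈ s, p.Prime) {x : ℝ}
    (hx : 1 ≤ x) :
    (#{d ∈ Icc 1 ⌊x⌋₊ | d ∈ factoredNumbers s} : ℝ) ≤
      (Real.log x + ∑ p ∈ s, Real.log p) ^ #s / ((#s).factorial * ∏ p ∈ s, Real.log p) := by
  induction s using Finset.induction_on generalizing x with
  | empty =>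
    simp only [Nat.factoredNumbers_empty, Set.mem_singleton_iff, card_empty, sum_empty,
      prod_empty, pow_zero, Nat.factorial_zero, Nat.cast_one, mul_one, div_one]
    exact_mod_cast card_le_one.2 fun a ha b hb => by simp_all
  | @insert p s hps ih =>
    have hp : p.Prime := hs p (mem_insert_self p s)
    have hs' : ∀ r ∈ s, r.Prime := fun r hr => hs r (mem_insert_of_mem hr)
    have hlog : ∀ r ∈ insert p s, 0 < Real.log r := fun r hr =>
      Real.log_pos (by exact_mod_cast (hs r hr).one_lt)
    have hσ : 0 ≤ ∑ r ∈ s, Real.log r :=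
      sum_nonneg fun r hr => (hlog r (mem_insert_of_mem hr)).le
    have hπ : 0 < ∏ r ∈ s, Real.log r := prod_pos fun r hr => hlog r (mem_insert_of_mem hr)
    calc (#{d ∈ Icc 1 ⌊x⌋₊ | d ∈ factoredNumbers (insert p s)} : ℝ)
        ≤ ∑ a ∈ range (Nat.log p ⌊x⌋₊ + 1),
            (#{m ∈ Icc 1 ⌊x / p ^ a⌋₊ | m ∈ factoredNumbers s} : ℝ) := by
          simp_rw [← Nat.cast_pow, Nat.floor_div_natCast]
          exact_mod_cast card_factoredNumbers_Icc_insert_le hp hps ⌊x⌋₊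
      _ ≤ 1 / ((#s).factorial * ∏ r ∈ s, Real.log r) *
            (Real.log x + ∑ r ∈ s, Real.log r + Real.log p) ^ (#s + 1) /
            ((#s + 1) * Real.log p) :=
          sum_comp_div_pow_le_of_le_log_add_pow (by positivity) hσ hp.one_lt
            (fun y hy => (ih hs' hy).trans_eq (by ring)) hx
      _ = _ := by
          rw [card_insert_of_notMem hps, sum_insert hps, prod_insert hps, Nat.factorial_succ]
          push_cast
          field_simp
          ring

namespace ArithmeticFunction

variable {R : Type*} [CommSemiring R]

theorem mul_apply_prime_pow {f h : ArithmeticFunction R} {r : ℕ} (hr : r.Prime) (i : ℕ) :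
    (f * h) (r ^ i) = ∑ j ∈ range (i + 1), f (r ^ j) * h (r ^ (i - j)) := by
  rw [mul_apply, Nat.sum_divisorsAntidiagonal fun x y => f x * h y, Nat.sum_divisors_prime_pow hr]
  exact sum_congr rfl fun j hj => by
    rw [Nat.pow_div (mem_range_succ_iff.1 hj) hr.pos]

theorem isMultiplicative_toArithmeticFunction_monoidHom (g : ℕ →* R) :
    (toArithmeticFunction (g ·)).IsMultiplicative :=
  IsMultiplicative.iff_ne_zero.2
    ⟨by simp [toArithmeticFunction], fun hm hn _ => by simp [toArithmeticFunction, hm, hn]⟩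

theorem isMultiplicative_indicator_factoredNumbers (s : Finset ℕ) :
    (toArithmeticFunction fun n =>
      if n ∈ factoredNumbers s then (1 : R) else 0).IsMultiplicative := by
  refine IsMultiplicative.iff_ne_zero.2 ⟨?_, fun {m n} hm hn _ => ?_⟩
  · simp [toArithmeticFunction, Nat.mem_factoredNumbers_iff_primeFactors_subset]
  · simp only [toArithmeticFunction, coe_mk, hm, hn, mul_ne_zero hm hn, if_false,
      Nat.mem_factoredNumbers_iff_primeFactors_subset, ne_eq, not_false_eq_true, true_and,
      Nat.primeFactors_mul hm hn, union_subset_iff]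
    split_ifs <;> simp_all

end ArithmeticFunction

section DirichletCharacter

open ArithmeticFunction

variable {R : Type*} [CommSemiring R]

theorem indicator_factoredNumbers_mul_dirichletCharacter_eq {q : ℕ} (hq : q ≠ 0)
    (χ : DirichletCharacter R q) (g : ℕ →* R)
    (hgq : ∀ p : ℕ, p.Prime → p ∣ q → g p = 1)
    (hgχ : ∀ n : ℕ, n.Coprime q → g n = χ n) :
    toArithmeticFunction (fun n => if n ∈ factoredNumbers q.primeFactors then (1 : R) else 0) *
      toArithmeticFunction (χ ·) = toArithmeticFunction (g ·) := by
  refine (IsMultiplicative.eq_iff_eq_on_prime_powers _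
    ((isMultiplicative_indicator_factoredNumbers _).mul χ.isMultiplicative_toArithmeticFunction) _
    (isMultiplicative_toArithmeticFunction_monoidHom g)).2 fun r i hr => ?_
  have hpow : ∀ j, r ^ j ≠ 0 := fun j => pow_ne_zero j hr.ne_zero
  have hmem : ∀ j, r ^ j ∈ factoredNumbers q.primeFactors ↔ r ∣ q ∨ j = 0 := fun j => by
    rcases eq_or_ne j 0 with rfl | hj
    · simp [Nat.mem_factoredNumbers_iff_primeFactors_subset]
    · simp [Nat.mem_factoredNumbers_iff_primeFactors_subset, Nat.primeFactors_prime_pow hj hr,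
        hr, hq, hj, hr.ne_zero]
  rw [mul_apply_prime_pow hr]
  simp only [toArithmeticFunction, coe_mk, hpow, if_false, hmem, map_pow]
  by_cases hrq : r ∣ q
  · have hχr : χ r = 0 := χ.map_nonunit fun hu =>
      hr.one_lt.ne' (Nat.eq_one_of_dvd_coprimes ((ZMod.isUnit_iff_coprime r q).1 hu) dvd_rfl hrq)
    rw [sum_eq_single_of_mem i (self_mem_range_succ i) fun j hj hji => ?_]
    · simp [hrq, hgq r hr hrq]
    · have : i - j ≠ 0 := by have := mem_range.1 hj; omega
      simp [hχr, this]
  · rw [sum_eq_single_of_mem 0 (by simp) fun j _ hj => by simp [hrq, hj]]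
    simp [hgχ r ((Nat.Prime.coprime_iff_not_dvd hr).2 hrq)]

theorem sum_Icc_eq_sum_factoredNumbers_mul {q : ℕ} (hq : q ≠ 0) (χ : DirichletCharacter R q)
    (g : ℕ →* R) (hgq : ∀ p : ℕ, p.Prime → p ∣ q → g p = 1)
    (hgχ : ∀ n : ℕ, n.Coprime q → g n = χ n) (N : ℕ) :
    ∑ n ∈ Icc 1 N, g n = ∑ d ∈ Icc 1 N,
      (if d ∈ factoredNumbers q.primeFactors then 1 else 0) * ∑ m ∈ Icc 1 (N / d), χ m := by
  have hval : ∀ (f : ℕ → R) (M : ℕ),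
      ∑ n ∈ Icc 1 M, f n = ∑ n ∈ Ioc 0 M, toArithmeticFunction f n :=
    fun f M => sum_congr rfl fun n hn => by
      simp [toArithmeticFunction, (Nat.succ_le_iff.1 (mem_Icc.1 hn).1).ne']
  simp_rw [hval, ← indicator_factoredNumbers_mul_dirichletCharacter_eq hq χ g hgq hgχ,
    sum_Ioc_mul_eq_sum_sum]
  exact sum_congr rfl fun n hn => by simp [toArithmeticFunction, (mem_Ioc.1 hn).1.ne']

theorem abs_sum_Icc_le_mul_card_factoredNumbers {q : ℕ} (hq : q ≠ 0)
    (χ : DirichletCharacter ℝ q) (g : ℕ →* ℝ)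
    (hgq : ∀ p : ℕ, p.Prime → p ∣ q → g p = 1)
    (hgχ : ∀ n : ℕ, n.Coprime q → g n = χ n) {S : ℝ}
    (hS : ∀ M : ℕ, |∑ m ∈ Icc 1 M, χ m| ≤ S) (N : ℕ) :
    |∑ n ∈ Icc 1 N, g n| ≤ S * #{d ∈ Icc 1 N | d ∈ factoredNumbers q.primeFactors} := by
  rw [sum_Icc_eq_sum_factoredNumbers_mul hq χ g hgq hgχ]
  calc _ ≤ ∑ d ∈ Icc 1 N, |(if d ∈ factoredNumbers q.primeFactors then 1 else 0) *
          ∑ m ∈ Icc 1 (N / d), χ m| := abs_sum_le_sum_abs _ _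
    _ ≤ ∑ d ∈ Icc 1 N, if d ∈ factoredNumbers q.primeFactors then S else 0 :=
        sum_le_sum fun d _ => by split_ifs <;> simp [hS]
    _ = _ := by simp [sum_ite, mul_comm]

end DirichletCharacter

theorem isEquivalent_log_add_const_pow (σ : ℝ) (k : ℕ) :
    (fun x => (Real.log x + σ) ^ k) ~[atTop] fun x => Real.log x ^ k :=
  (IsEquivalent.refl.add_isLittleO Real.isLittleO_const_log_atTop).pow k

theorem isBigO_rpow_of_abs_le_log_add_pow {f : ℝ → ℝ} {C σ : ℝ} {k : ℕ}
    (hf : ∀ᶠ x in atTop, |f x| ≤ C * (Real.log x + σ) ^ k) {α : ℝ} (hα : 0 < α) :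
    f =O[atTop] fun x => x ^ α := by
  have hlog : f =O[atTop] fun x => (Real.log x + σ) ^ k := by
    refine IsBigO.of_bound C ?_
    filter_upwards [hf, Real.tendsto_log_atTop.eventually_ge_atTop (-σ)] with x hx hlog
    have hσ : 0 ≤ Real.log x + σ := by linarith
    rwa [Real.norm_eq_abs, Real.norm_eq_abs, abs_of_nonneg (pow_nonneg hσ k)]
  refine hlog.trans ((isEquivalent_log_add_const_pow σ k).isBigO.trans ?_)
  simpa only [Real.rpow_natCast] using (isLittleO_log_rpow_rpow_atTop (k : ℝ) hα).isBigO

theorem limsup_abs_div_log_pow_le {f : ℝ → ℝ} {C σ : ℝ} {k : ℕ}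
    (hf : ∀ᶠ x in atTop, |f x| ≤ C * (Real.log x + σ) ^ k) :
    limsup (fun x => |f x| / Real.log x ^ k) atTop ≤ C := by
  have hlog_pos : ∀ᶠ x in atTop, 0 < Real.log x := Real.tendsto_log_atTop.eventually_gt_atTop 0
  have hratio : Tendsto (fun x => (Real.log x + σ) ^ k / Real.log x ^ k) atTop (𝓝 1) :=
    (isEquivalent_iff_tendsto_one (hlog_pos.mono fun x hx => by positivity)).1
      (isEquivalent_log_add_const_pow σ k)
  have hlim : Tendsto (fun x => C * ((Real.log x + σ) ^ k / Real.log x ^ k)) atTop (𝓝 C) := by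
    simpa using hratio.const_mul C
  calc limsup (fun x => |f x| / Real.log x ^ k) atTop
      ≤ limsup (fun x => C * ((Real.log x + σ) ^ k / Real.log x ^ k)) atTop := by
        refine limsup_le_limsup ?_ ?_ hlim.isBoundedUnder_le
        · filter_upwards [hf, hlog_pos] with x hx hx0
          rw [← mul_div_assoc]
          exact div_le_div_of_nonneg_right hx (by positivity)
        · exact isBoundedUnder_of_eventually_ge
            (hlog_pos.mono fun x hx => by positivity) |>.isCoboundedUnder_le
    _ = C := hlim.limsup_eq

theorem stmt15_general (q : ℕ) (hq : 1 < q) (χ : DirichletCharacter ℝ q)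
    (g : ℕ → ℝ)
    (hg1 : g 1 = 1) (hgm : ∀ m n : ℕ, g (m * n) = g m * g n)
    (hgq : ∀ p : ℕ, p.Prime → p ∣ q → g p = 1)
    (hgχ : ∀ n : ℕ, Nat.Coprime n q → g n = χ (n : ZMod q))
    (B : ℝ) (hB : ∀ y : ℝ, |∑ n ∈ Icc 1 ⌊y⌋₊, χ (n : ZMod q)| ≤ B) :
    (∀ α > (0:ℝ),
      (fun x : ℝ => ∑ n ∈ Icc 1 ⌊x⌋₊, g n) =O[atTop] fun x : ℝ => x ^ α) ∧
    Filter.limsup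
        (fun x : ℝ => |∑ n ∈ Icc 1 ⌊x⌋₊, g n| / (Real.log x) ^ q.primeFactors.card) atTop
      ≤ (⨆ y : ℝ, |∑ n ∈ Icc 1 ⌊y⌋₊, χ (n : ZMod q)|) /
          (Nat.factorial q.primeFactors.card) *
        ∏ p ∈ q.primeFactors, 1 / Real.log p := by
  set S := ⨆ y : ℝ, |∑ n ∈ Icc 1 ⌊y⌋₊, χ (n : ZMod q)|
  have hS : ∀ y : ℝ, |∑ n ∈ Icc 1 ⌊y⌋₊, χ (n : ZMod q)| ≤ S :=
    le_ciSup ⟨B, Set.forall_mem_range.2 hB⟩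
  have hS0 : 0 ≤ S := by simpa using hS 0
  have hbound : ∀ᶠ x in atTop, |∑ n ∈ Icc 1 ⌊x⌋₊, g n| ≤
      S / (Nat.factorial q.primeFactors.card) * (∏ p ∈ q.primeFactors, 1 / Real.log p) *
        (Real.log x + ∑ p ∈ q.primeFactors, Real.log p) ^ q.primeFactors.card := by
    filter_upwards [eventually_ge_atTop 1] with x hx
    calc |∑ n ∈ Icc 1 ⌊x⌋₊, g n|
        ≤ S * #{d ∈ Icc 1 ⌊x⌋₊ | d ∈ factoredNumbers q.primeFactors} :=
          abs_sum_Icc_le_mul_card_factoredNumbers (by omega) χ ⟨⟨g, hg1⟩, hgm⟩ hgq hgχ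
            (fun M => by simpa using hS M) ⌊x⌋₊
      _ ≤ S * ((Real.log x + ∑ p ∈ q.primeFactors, Real.log p) ^ q.primeFactors.card /
            ((Nat.factorial q.primeFactors.card) * ∏ p ∈ q.primeFactors, Real.log p)) := by
          gcongr
          exact card_factoredNumbers_Icc_le (fun p hp => Nat.prime_of_mem_primeFactors hp) hx
      _ = _ := by rw [prod_div_distrib, prod_const_one]; ring
  exact ⟨fun α hα => isBigO_rpow_of_abs_le_log_add_pow hbound hα,
    limsup_abs_div_log_pow_le hbound⟩

theorem stmt15 (q : ℕ) (hq : 1 < q) (χ : DirichletCharacter ℝ q) (hχ : χ ≠ 1)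
    (g : ℕ → ℝ)
    (hg1 : g 1 = 1) (hgm : ∀ m n : ℕ, g (m * n) = g m * g n)
    (hgpm : ∀ n : ℕ, 0 < n → g n = 1 ∨ g n = -1)
    (hgq : ∀ p : ℕ, p.Prime → p ∣ q → g p = 1)
    (hgχ : ∀ n : ℕ, Nat.Coprime n q → g n = χ (n : ZMod q))
    (B : ℝ) (hB : ∀ y : ℝ, |∑ n ∈ Icc 1 ⌊y⌋₊, χ (n : ZMod q)| ≤ B) :
    (∀ α > (0:ℝ),
      (fun x : ℝ => ∑ n ∈ Icc 1 ⌊x⌋₊, g n) =O[atTop] fun x : ℝ => x ^ α) ∧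
    Filter.limsup
        (fun x : ℝ => |∑ n ∈ Icc 1 ⌊x⌋₊, g n| / (Real.log x) ^ q.primeFactors.card) atTop
      ≤ (⨆ y : ℝ, |∑ n ∈ Icc 1 ⌊y⌋₊, χ (n : ZMod q)|) /
          (Nat.factorial q.primeFactors.card) *
        ∏ p ∈ q.primeFactors, 1 / Real.log p :=
  stmt15_general q hq χ g hg1 hgm hgq hgχ B hB
end

section
/- Let χ be a real non-principal Dirichlet character, k ≥ 2 even, and f = μ_k²·χ. If ∑_{n ≤ x} f(n) ≪ x^{σ} for some σ < 1/(2k), then the Dirichlet series F(s) = L(s,χ)/ζ(ks) extends analytically to Re(s) > σ; in particular, every zero s₀ of ζ(ks) with Re(s₀) > σ must satisfy L(s₀, χ) = 0. -/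
open Finset Filter Asymptotics Complex MeasureTheory Set Topology

noncomputable section
namespace Stmt19Aux

/-! ### Number theory: unique `k`-free decomposition -/

theorem exists_kfree_decomp (k : ℕ) (hk : 1 ≤ k) :
    ∀ n : ℕ, n ≠ 0 → ∃ a m : ℕ, a ≠ 0 ∧ m ≠ 0 ∧ n = a * m ^ k ∧
      ∀ p : ℕ, p.Prime → ¬ p ^ k ∣ a := by
  intro n
  induction n using Nat.strong_induction_on with
  | _ n ih =>
    intro hn
    by_cases h : ∀ p : ℕ, p.Prime → ¬ p ^ k ∣ n
    · exact ⟨n, 1, hn, one_ne_zero, by simp, h⟩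
    · push_neg at h
      obtain ⟨p, hp, hdvd⟩ := h
      obtain ⟨n', rfl⟩ := hdvd
      have hpk : 2 ≤ p ^ k := by
        calc 2 = 2 ^ 1 := by norm_num
        _ ≤ p ^ k := Nat.pow_le_pow_left hp.two_le k |>.trans'
          (Nat.pow_le_pow_right (by norm_num) hk)
      have hn' : n' ≠ 0 := by rintro rfl; simp at hn
      have hlt : n' < p ^ k * n' := by
        have := Nat.pos_of_ne_zero hn'
        calc n' = 1 * n' := (one_mul n').symm
        _ < p ^ k * n' := by
          exact (Nat.mul_lt_mul_right this).mpr (by omega)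
      obtain ⟨a, m, ha, hm, heq, hfree⟩ := ih n' hlt hn'
      exact ⟨a, p * m, ha, Nat.mul_ne_zero hp.pos.ne' hm, by rw [heq]; ring, hfree⟩

theorem kfree_decomp_unique (k : ℕ) (hk : 1 ≤ k) {a₁ m₁ a₂ m₂ : ℕ}
    (ha₁ : a₁ ≠ 0) (hm₁ : m₁ ≠ 0) (ha₂ : a₂ ≠ 0) (hm₂ : m₂ ≠ 0)
    (hf₁ : ∀ p : ℕ, p.Prime → ¬ p ^ k ∣ a₁) (hf₂ : ∀ p : ℕ, p.Prime → ¬ p ^ k ∣ a₂)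
    (h : a₁ * m₁ ^ k = a₂ * m₂ ^ k) : a₁ = a₂ ∧ m₁ = m₂ := by
  have key : ∀ p : ℕ, a₁.factorization p = a₂.factorization p ∧
      m₁.factorization p = m₂.factorization p := by
    intro p
    by_cases hp : p.Prime
    · have h1 : a₁.factorization p < k := by
        by_contra hcon
        exact hf₁ p hp ((hp.pow_dvd_iff_le_factorization ha₁).mpr (by omega))
      have h2 : a₂.factorization p < k := by
        by_contra hcon
        exact hf₂ p hp ((hp.pow_dvd_iff_le_factorization ha₂).mpr (by omega))
      have hfac : a₁.factorization p + k * m₁.factorization p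
          = a₂.factorization p + k * m₂.factorization p := by
        have := congrArg (fun f => Nat.factorization f p) h
        simpa [Nat.factorization_mul ha₁ (pow_ne_zero k hm₁),
          Nat.factorization_mul ha₂ (pow_ne_zero k hm₂), Nat.factorization_pow] using this
      have e1 : a₁.factorization p = a₂.factorization p := by
        have := congrArg (fun x => x % k) hfac
        simpa [Nat.add_mul_mod_self_left, Nat.mod_eq_of_lt h1, Nat.mod_eq_of_lt h2] using this
      refine ⟨e1, ?_⟩
      have : k * m₁.factorization p = k * m₂.factorization p := by omega
      exact Nat.eq_of_mul_eq_mul_left (by omega) this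
    · simp [Nat.factorization_eq_zero_of_not_prime _ hp]
  have ea : a₁ = a₂ := by
    refine Nat.factorization_inj (by simpa using ha₁) (by simpa using ha₂) ?_
    ext p; exact (key p).1
  have em : m₁ = m₂ := by
    refine Nat.factorization_inj (by simpa using hm₁) (by simpa using hm₂) ?_
    ext p; exact (key p).2
  exact ⟨ea, em⟩

/-! ### Character facts -/

variable {q : ℕ} [NeZero q] (χ : DirichletCharacter ℂ q) (k : ℕ)

theorem map_unit_ne_zero {m : ZMod q} (hm : IsUnit m) : χ m ≠ 0 :=
  (hm.map χ).ne_zero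

theorem pow_k_eq_one (hreal : ∀ m : ZMod q, χ m = -1 ∨ χ m = 0 ∨ χ m = 1)
    (hkeven : Even k) {m : ZMod q} (hm : IsUnit m) : χ m ^ k = 1 := by
  rcases hreal m with h | h | h
  · rw [h]; exact hkeven.neg_one_pow
  · exact absurd h (map_unit_ne_zero χ hm)
  · rw [h, one_pow]

open scoped Classical in
/-- The coefficient sequence. -/
def c (n : ℕ) : ℂ := (if ∀ p : ℕ, p.Prime → ¬ p ^ k ∣ n then (1:ℂ) else 0) * χ (n : ZMod q)

open scoped Classical in
theorem c_apply (n : ℕ) :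
    c χ k n = (if ∀ p : ℕ, p.Prime → ¬ p ^ k ∣ n then (1:ℂ) else 0) * χ (n : ZMod q) := rfl

theorem c_zero : c χ k 0 = 0 := by
  rw [c_apply, if_neg, zero_mul]
  intro h
  exact h 2 Nat.prime_two (dvd_zero _)

theorem norm_chi_le (hreal : ∀ m : ZMod q, χ m = -1 ∨ χ m = 0 ∨ χ m = 1) (m : ZMod q) :
    ‖χ m‖ ≤ 1 := by
  rcases hreal m with h | h | h <;> rw [h] <;> norm_num

open scoped Classical in
theorem norm_c_le (hreal : ∀ m : ZMod q, χ m = -1 ∨ χ m = 0 ∨ χ m = 1) (n : ℕ) :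
    ‖c χ k n‖ ≤ 1 := by
  by_cases h : ∀ p : ℕ, p.Prime → ¬ p ^ k ∣ n
  · rw [c_apply, if_pos h, one_mul]
    exact norm_chi_le χ hreal _
  · rw [c_apply, if_neg h, zero_mul, norm_zero]; norm_num

/-! ### The summatory function -/

/-- The summatory function. -/
def M (t : ℝ) : ℂ := ∑ n ∈ Finset.Icc 1 ⌊t⌋₊, c χ k n

theorem M_eq_Icc0 (t : ℝ) : M χ k t = ∑ n ∈ Finset.Icc 0 ⌊t⌋₊, c χ k n := by
  rw [Finset.Icc_eq_cons_Ioc (Nat.zero_le _), Finset.sum_cons, c_zero, zero_add, M,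
    ← Finset.Icc_add_one_left_eq_Ioc, zero_add]

theorem M_eq_zero {t : ℝ} (ht : t < 1) : M χ k t = 0 := by
  rw [M]
  rcases lt_or_ge t 0 with h | h
  · rw [Nat.floor_of_nonpos h.le]; simp
  · rw [Nat.floor_eq_zero.mpr ht]; simp

theorem norm_M_le (hreal : ∀ m : ZMod q, χ m = -1 ∨ χ m = 0 ∨ χ m = 1) {t : ℝ} (ht : 0 ≤ t) :
    ‖M χ k t‖ ≤ t := by
  calc ‖M χ k t‖ ≤ ∑ n ∈ Finset.Icc 1 ⌊t⌋₊, ‖c χ k n‖ := norm_sum_le _ _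
  _ ≤ ∑ n ∈ Finset.Icc 1 ⌊t⌋₊, 1 := Finset.sum_le_sum fun n _ => norm_c_le χ k hreal n
  _ = ⌊t⌋₊ := by simp
  _ ≤ t := Nat.floor_le ht

theorem M_measurable : Measurable (M χ k) := by
  have : M χ k = (fun N : ℕ => ∑ n ∈ Finset.Icc 1 N, c χ k n) ∘ Nat.floor := rfl
  rw [this]
  exact (measurable_from_top).comp Nat.measurable_floor

theorem M_locallyIntegrableOn (hreal : ∀ m : ZMod q, χ m = -1 ∨ χ m = 0 ∨ χ m = 1) :
    LocallyIntegrableOn (M χ k) (Ioi 0) := by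
  intro x hx
  refine ⟨Ioc 0 (x + 1), ?_, ?_⟩
  · refine mem_nhdsWithin.mpr ⟨Iio (x + 1), isOpen_Iio, by simp, fun t ht => ⟨ht.2, ht.1.le⟩⟩
  · refine Integrable.mono' (integrable_const (x + 1)) ((M_measurable χ k).aestronglyMeasurable) ?_
    refine (ae_restrict_iff' measurableSet_Ioc).mpr (Filter.Eventually.of_forall fun t ht => ?_)
    calc ‖M χ k t‖ ≤ t := norm_M_le χ k hreal ht.1.le
    _ ≤ x + 1 := ht.2

/-! ### Global bound -/

theorem global_bound {N : ℝ → ℂ} {σ : ℝ} (hb : ∀ t : ℝ, 0 ≤ t → ‖N t‖ ≤ t)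
    (hO : N =O[atTop] fun x : ℝ => x ^ σ) :
    ∃ C : ℝ, 0 ≤ C ∧ ∀ t : ℝ, 1 ≤ t → ‖N t‖ ≤ C * t ^ σ := by
  obtain ⟨C, hC⟩ := hO.isBigOWith
  rw [IsBigOWith, eventually_atTop] at hC
  obtain ⟨T₀, hT₀⟩ := hC
  set T := max T₀ 1 with hT
  have hT1 : (1:ℝ) ≤ T := le_max_right _ _
  have hTb : ∀ x ≥ T, ‖N x‖ ≤ C * x ^ σ := by
    intro x hx
    have h1x : (1:ℝ) ≤ x := hT1.trans hx
    calc ‖N x‖ ≤ C * ‖x ^ σ‖ := hT₀ x ((le_max_left _ _).trans hx)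
    _ = C * x ^ σ := by rw [Real.norm_of_nonneg (Real.rpow_nonneg (by linarith) σ)]
  set d := min 1 (T ^ σ) with hd
  have hd0 : 0 < d := lt_min one_pos (Real.rpow_pos_of_pos (by linarith) σ)
  have hmid : ∀ x : ℝ, 1 ≤ x → x ≤ T → d ≤ x ^ σ := by
    intro x h1 h2
    rcases le_or_gt 0 σ with hσ0 | hσ0
    · calc d ≤ 1 := min_le_left _ _
      _ = (1:ℝ) ^ σ := (Real.one_rpow σ).symm
      _ ≤ x ^ σ := Real.rpow_le_rpow (by norm_num) h1 hσ0
    · calc d ≤ T ^ σ := min_le_right _ _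
      _ ≤ x ^ σ := Real.rpow_le_rpow_of_nonpos (by linarith) h2 hσ0.le
  refine ⟨max C (T / d) + 1, by positivity, fun t ht => ?_⟩
  have ht0 : (0:ℝ) < t := by linarith
  have htσ : 0 < t ^ σ := Real.rpow_pos_of_pos ht0 σ
  rcases le_or_gt T t with h | h
  · calc ‖N t‖ ≤ C * t ^ σ := hTb t h
    _ ≤ (max C (T / d) + 1) * t ^ σ := by
      apply mul_le_mul_of_nonneg_right _ htσ.le
      calc C ≤ max C (T / d) := le_max_left _ _
      _ ≤ _ := by linarith
  · calc ‖N t‖ ≤ t := hb t ht0.le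
    _ ≤ T := h.le
    _ = (T / d) * d := by field_simp
    _ ≤ (T / d) * t ^ σ := by
      apply mul_le_mul_of_nonneg_left (hmid t ht h.le)
      positivity
    _ ≤ (max C (T / d) + 1) * t ^ σ := by
      apply mul_le_mul_of_nonneg_right _ htσ.le
      calc T / d ≤ max C (T / d) := le_max_right _ _
      _ ≤ _ := by linarith

/-! ### Mellin transform side -/

theorem F_differentiableOn {N : ℝ → ℂ} {σ : ℝ} (hzero : ∀ t : ℝ, t < 1 → N t = 0)
    (hloc : LocallyIntegrableOn N (Ioi 0))
    (hO : N =O[atTop] fun x : ℝ => x ^ σ) :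
    DifferentiableOn ℂ (fun s : ℂ => s * mellin N (-s)) {s : ℂ | σ < s.re} := by
  intro z hz
  have hz' : σ < z.re := hz
  have hbot : N =O[𝓝[>] (0:ℝ)] fun x : ℝ => x ^ (-(-z.re - 1)) := by
    have hev : N =ᶠ[𝓝[>] (0:ℝ)] 0 := by
      filter_upwards [Ioo_mem_nhdsGT_of_mem (by norm_num : (0:ℝ) ∈ Ico (0:ℝ) 1)] with t ht
      exact hzero t ht.2
    exact hev.trans_isBigO (isBigO_zero _ _)
  have hmel : DifferentiableAt ℂ (mellin N) (-z) := by
    refine mellin_differentiableAt_of_isBigO_rpow (a := -σ) (b := -z.re - 1) hloc ?_ ?_ hbot ?_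
    · simpa using hO
    · simp only [Complex.neg_re]; linarith
    · simp only [Complex.neg_re]; linarith
  have h1 : DifferentiableAt ℂ (fun s : ℂ => mellin N (-s)) z := by
    have := DifferentiableAt.comp z hmel (differentiable_neg.differentiableAt (x := z))
    exact this
  exact ((differentiableAt_id.mul h1)).differentiableWithinAt

theorem integrable_aux {N : ℝ → ℂ} {σ C : ℝ} {s : ℂ} (hmeas : Measurable N)
    (hC : ∀ t : ℝ, 1 ≤ t → ‖N t‖ ≤ C * t ^ σ) (hs : σ < s.re) :
    IntegrableOn (fun t : ℝ => (t : ℂ) ^ (-s - 1) * N t) (Ioi (1:ℝ)) := by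
  have hmeas2 : AEStronglyMeasurable (fun t : ℝ => (t : ℂ) ^ (-s - 1) * N t)
      (volume.restrict (Ioi (1:ℝ))) := by
    have hcont : ContinuousOn (fun t : ℝ => (t : ℂ) ^ (-s - 1)) (Ioi (1:ℝ)) := fun t ht =>
      (Complex.continuousAt_ofReal_cpow_const t _
        (Or.inr (by simp; linarith [mem_Ioi.mp ht]))).continuousWithinAt
    exact (hcont.aestronglyMeasurable measurableSet_Ioi).mul
      (hmeas.aestronglyMeasurable.restrict)
  have hint : IntegrableOn (fun t : ℝ => C * t ^ (σ - s.re - 1)) (Ioi (1:ℝ)) :=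
    (integrableOn_Ioi_rpow_of_lt (by linarith) zero_lt_one).const_mul C
  refine Integrable.mono' hint hmeas2 ?_
  refine (ae_restrict_iff' measurableSet_Ioi).mpr (Filter.Eventually.of_forall fun t ht => ?_)
  have ht0 : (0:ℝ) < t := lt_trans zero_lt_one ht
  rw [norm_mul]
  have h1 : ‖(t : ℂ) ^ (-s - 1)‖ = t ^ (-s.re - 1) := by
    rw [Complex.norm_cpow_eq_rpow_re_of_pos ht0]
    norm_num
  rw [h1]
  calc t ^ (-s.re - 1) * ‖N t‖ ≤ t ^ (-s.re - 1) * (C * t ^ σ) := by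
        apply mul_le_mul_of_nonneg_left (hC t (le_of_lt ht)) (Real.rpow_nonneg ht0.le _)
  _ = C * t ^ (σ - s.re - 1) := by
      rw [show σ - s.re - 1 = (-s.re - 1) + σ by ring, Real.rpow_add ht0]; ring

theorem mellin_eq {N : ℝ → ℂ} {σ C : ℝ} {s : ℂ} (hmeas : Measurable N)
    (hzero : ∀ t : ℝ, t < 1 → N t = 0)
    (hC : ∀ t : ℝ, 1 ≤ t → ‖N t‖ ≤ C * t ^ σ) (hs : σ < s.re) :
    mellin N (-s) = ∫ t in Ioi (1:ℝ), (t : ℂ) ^ (-s - 1) * N t := by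
  have hae : (fun t : ℝ => (t : ℂ) ^ (-s - 1) * N t) =ᵐ[volume.restrict (Ioc 0 1)] 0 := by
    refine (ae_restrict_iff' measurableSet_Ioc).mpr ?_
    filter_upwards [(Set.countable_singleton (1:ℝ)).ae_notMem volume] with t ht htmem
    have : t < 1 := lt_of_le_of_ne htmem.2 (by simpa using ht)
    simp [hzero t this]
  have hint0 : IntegrableOn (fun t : ℝ => (t : ℂ) ^ (-s - 1) * N t) (Ioc (0:ℝ) 1) :=
    (integrable_zero _ _ _).congr hae.symm
  have hint1 : IntegrableOn (fun t : ℝ => (t : ℂ) ^ (-s - 1) * N t) (Ioi (1:ℝ)) :=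
    integrable_aux hmeas hC hs
  have hsplit := setIntegral_union (Set.Ioc_disjoint_Ioi le_rfl) measurableSet_Ioi hint0 hint1
    (f := fun t : ℝ => (t : ℂ) ^ (-s - 1) * N t) (μ := volume)
  rw [Set.Ioc_union_Ioi_eq_Ioi zero_le_one] at hsplit
  have h0 : ∫ t in Ioc (0:ℝ) 1, (t : ℂ) ^ (-s - 1) * N t = 0 := by
    rw [integral_congr_ae hae]; simp
  rw [mellin]
  simp only [smul_eq_mul]
  calc ∫ t in Ioi (0:ℝ), (t : ℂ) ^ (-s - 1) * N t
      = (∫ t in Ioc (0:ℝ) 1, (t : ℂ) ^ (-s - 1) * N t)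
        + ∫ t in Ioi (1:ℝ), (t : ℂ) ^ (-s - 1) * N t := hsplit
  _ = _ := by rw [h0, zero_add]

/-! ### Abel summation -/

theorem hasDerivAt_cpow_neg {t : ℝ} (ht : 0 < t) (s : ℂ) :
    HasDerivAt (fun u : ℝ => (u : ℂ) ^ (-s)) (-s * (t : ℂ) ^ (-s - 1)) t := by
  have h0 : (t : ℂ) ∈ Complex.slitPlane := by
    rw [Complex.mem_slitPlane_iff]
    left; simpa using ht
  have h1 : HasDerivAt (fun z : ℂ => z ^ (-s)) (-s * (t : ℂ) ^ (-s - 1) * 1) ((t : ℝ) : ℂ) :=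
    (hasDerivAt_id ((t : ℝ) : ℂ)).cpow_const (c := -s) h0
  simpa using h1.comp_ofReal

theorem norm_term_summable {c : ℕ → ℂ} {s : ℂ} (hc1 : ∀ n, ‖c n‖ ≤ 1) (hs : 1 < s.re) :
    Summable fun n : ℕ => ‖LSeries.term c s n‖ := by
  have hsum : Summable fun n : ℕ => 1 / (n : ℝ) ^ s.re :=
    (Real.summable_one_div_nat_rpow).mpr hs
  refine Summable.of_nonneg_of_le (fun n => norm_nonneg _) (fun n => ?_) hsum
  rcases Nat.eq_zero_or_pos n with rfl | hn
  · rw [LSeries.term_zero, norm_zero, Nat.cast_zero, Real.zero_rpow (by linarith), div_zero]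
  · rw [LSeries.term_of_ne_zero hn.ne', norm_div, norm_natCast_cpow_of_pos hn]
    have hp : (0:ℝ) < (n:ℝ) ^ s.re := Real.rpow_pos_of_pos (by exact_mod_cast hn) _
    exact div_le_div_of_nonneg_right (hc1 n) hp.le |>.trans_eq rfl

theorem partial_sum_eq {c : ℕ → ℂ} (hc0 : c 0 = 0) (s : ℂ) (NN : ℕ) :
    ∑ n ∈ Finset.Icc 0 NN, ((n : ℝ) : ℂ) ^ (-s) * c n
      = ∑ n ∈ Finset.range (NN + 1), LSeries.term c s n := by
  rw [Finset.range_eq_Ico, ← Finset.Ico_add_one_right_eq_Icc]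
  refine Finset.sum_congr rfl fun n _ => ?_
  rcases Nat.eq_zero_or_pos n with rfl | hn
  · simp [hc0, LSeries.term_zero]
  · rw [LSeries.term_of_ne_zero hn.ne']
    push_cast
    rw [Complex.cpow_neg]
    field_simp

/-- The key Abel summation limit identity. -/
theorem tsum_term_eq {σ C : ℝ} {s : ℂ} {c : ℕ → ℂ} (hc0 : c 0 = 0) (hc1 : ∀ n, ‖c n‖ ≤ 1)
    {NP : ℝ → ℂ} (hNP : ∀ t : ℝ, NP t = ∑ n ∈ Finset.Icc 0 ⌊t⌋₊, c n)
    (hC : ∀ t : ℝ, 1 ≤ t → ‖NP t‖ ≤ C * t ^ σ)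
    (hint : IntegrableOn (fun t : ℝ => (t : ℂ) ^ (-s - 1) * NP t) (Ioi (1:ℝ)))
    (hs : 1 < s.re) (hsσ : σ < s.re) :
    ∑' n : ℕ, LSeries.term c s n = s * ∫ t in Ioi (1:ℝ), (t : ℂ) ^ (-s - 1) * NP t := by
  set f : ℝ → ℂ := fun u : ℝ => (u : ℂ) ^ (-s) with hf
  have habel : ∀ x : ℝ, 1 ≤ x →
      ∑ n ∈ Finset.range (⌊x⌋₊ + 1), LSeries.term c s n
        = f x * NP x - ∫ t in Ioc 1 x, (-s * (t : ℂ) ^ (-s - 1)) * NP t := by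
    intro x hx
    have hdiff : ∀ t ∈ Icc (1:ℝ) x, DifferentiableAt ℝ f t := fun t ht =>
      (hasDerivAt_cpow_neg (lt_of_lt_of_le zero_lt_one ht.1) s).differentiableAt
    have hderiv_eq : ∀ t ∈ Icc (1:ℝ) x, deriv f t = -s * (t : ℂ) ^ (-s - 1) := fun t ht =>
      (hasDerivAt_cpow_neg (lt_of_lt_of_le zero_lt_one ht.1) s).deriv
    have hcont : ContinuousOn (fun t : ℝ => -s * (t : ℂ) ^ (-s - 1)) (Icc (1:ℝ) x) := by
      refine continuousOn_const.mul fun t ht => ?_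
      exact (Complex.continuousAt_ofReal_cpow_const t _
        (Or.inr (by linarith [ht.1]))).continuousWithinAt
    have hint2 : IntegrableOn (deriv f) (Icc (1:ℝ) x) :=
      (hcont.integrableOn_Icc).congr_fun (fun t ht => (hderiv_eq t ht).symm) measurableSet_Icc
    have h := sum_mul_eq_sub_integral_mul₀ c hc0 x hdiff hint2
    rw [← partial_sum_eq hc0 s ⌊x⌋₊]
    calc ∑ n ∈ Finset.Icc 0 ⌊x⌋₊, ((n : ℝ) : ℂ) ^ (-s) * c n
        = f x * ∑ n ∈ Finset.Icc 0 ⌊x⌋₊, c n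
          - ∫ t in Ioc 1 x, deriv f t * ∑ n ∈ Finset.Icc 0 ⌊t⌋₊, c n := h
    _ = f x * NP x - ∫ t in Ioc 1 x, (-s * (t : ℂ) ^ (-s - 1)) * NP t := by
        rw [hNP x]
        congr 1
        refine setIntegral_congr_fun measurableSet_Ioc fun t ht => ?_
        rw [hderiv_eq t ⟨ht.1.le, ht.2⟩, hNP t]
  have hsummable : Summable (fun n : ℕ => LSeries.term c s n) :=
    (norm_term_summable hc1 hs).of_norm
  have hlim1 : Tendsto (fun x : ℝ => ∑ n ∈ Finset.range (⌊x⌋₊ + 1), LSeries.term c s n)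
      atTop (𝓝 (∑' n : ℕ, LSeries.term c s n)) := by
    have h1 := hsummable.hasSum.tendsto_sum_nat
    exact h1.comp ((tendsto_add_atTop_nat 1).comp tendsto_nat_floor_atTop)
  have hlim2 : Tendsto (fun x : ℝ => f x * NP x) atTop (𝓝 0) := by
    have hO : (fun x : ℝ => f x * NP x) =O[atTop] fun x : ℝ => x ^ (σ - s.re) := by
      rw [isBigO_iff]
      refine ⟨C, eventually_atTop.mpr ⟨1, fun x hx => ?_⟩⟩
      have hx0 : (0:ℝ) < x := lt_of_lt_of_le zero_lt_one hx
      rw [norm_mul]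
      have h1 : ‖f x‖ = x ^ (-s.re) := by
        rw [hf, Complex.norm_cpow_eq_rpow_re_of_pos hx0]
        norm_num
      rw [h1, Real.norm_of_nonneg (Real.rpow_nonneg hx0.le _),
        show σ - s.re = -s.re + σ by ring, Real.rpow_add hx0]
      calc x ^ (-s.re) * ‖NP x‖ ≤ x ^ (-s.re) * (C * x ^ σ) :=
            mul_le_mul_of_nonneg_left (hC x hx) (Real.rpow_nonneg hx0.le _)
      _ = C * (x ^ (-s.re) * x ^ σ) := by ring
    have hz : Tendsto (fun x : ℝ => x ^ (σ - s.re)) atTop (𝓝 0) := by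
      have := tendsto_rpow_neg_atTop (by linarith : 0 < s.re - σ)
      simpa [neg_sub] using this
    exact hO.trans_tendsto hz
  have hint' : IntegrableOn (fun t : ℝ => (-s * (t : ℂ) ^ (-s - 1)) * NP t) (Ioi (1:ℝ)) := by
    have h2 : IntegrableOn (fun t : ℝ => -s * ((t : ℂ) ^ (-s - 1) * NP t)) (Ioi (1:ℝ)) :=
      hint.const_mul (-s)
    exact h2.congr_fun (fun t ht => by ring) measurableSet_Ioi
  have hlim3 : Tendsto (fun x : ℝ => ∫ t in Ioc 1 x, (-s * (t : ℂ) ^ (-s - 1)) * NP t)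
      atTop (𝓝 (∫ t in Ioi (1:ℝ), (-s * (t : ℂ) ^ (-s - 1)) * NP t)) := by
    have h := intervalIntegral_tendsto_integral_Ioi (1:ℝ) hint' tendsto_id
    refine h.congr' ?_
    filter_upwards [eventually_ge_atTop (1:ℝ)] with x hx
    simp only [id_eq]
    rw [intervalIntegral.integral_of_le hx]
  have hcomb : Tendsto (fun x : ℝ => ∑ n ∈ Finset.range (⌊x⌋₊ + 1), LSeries.term c s n)
      atTop (𝓝 (0 - ∫ t in Ioi (1:ℝ), (-s * (t : ℂ) ^ (-s - 1)) * NP t)) := by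
    refine Tendsto.congr' ?_ (hlim2.sub hlim3)
    filter_upwards [eventually_ge_atTop (1:ℝ)] with x hx
    exact (habel x hx).symm
  have hkey := tendsto_nhds_unique hlim1 hcomb
  rw [hkey, zero_sub, ← integral_neg]
  have heq : (fun a : ℝ => -(-s * (a : ℂ) ^ (-s - 1) * NP a))
      = fun a : ℝ => s • ((a : ℂ) ^ (-s - 1) * NP a) := by
    ext a; simp only [smul_eq_mul]; ring
  rw [heq, integral_smul, smul_eq_mul]

/-! ### cpow arithmetic -/

theorem natpow_cpow (m k : ℕ) (s : ℂ) : ((m ^ k : ℕ) : ℂ) ^ s = ((m : ℂ) ^ s) ^ k := by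
  induction k with
  | zero => simp
  | succ n ih =>
    have h := mul_cpow_ofReal_nonneg (a := ((m ^ n : ℕ) : ℝ)) (b := (m : ℝ))
      (by positivity) (by positivity) s
    calc ((m ^ (n+1) : ℕ) : ℂ) ^ s
        = ((((m ^ n : ℕ) : ℝ) : ℂ) * (((m : ℝ)) : ℂ)) ^ s := by norm_cast
    _ = (((m ^ n : ℕ) : ℝ) : ℂ) ^ s * (((m : ℝ)) : ℂ) ^ s := h
    _ = ((m : ℂ) ^ s) ^ n * (m : ℂ) ^ s := by
        rw [show (((m ^ n : ℕ) : ℝ) : ℂ) = ((m ^ n : ℕ) : ℂ) by norm_cast, ih,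
          show (((m : ℝ)) : ℂ) = (m : ℂ) by norm_cast]
    _ = ((m : ℂ) ^ s) ^ (n + 1) := (pow_succ _ _).symm

theorem decomp_cpow (a m k : ℕ) (s : ℂ) :
    ((a * m ^ k : ℕ) : ℂ) ^ s = (a : ℂ) ^ s * ((m : ℂ) ^ s) ^ k := by
  have h := mul_cpow_ofReal_nonneg (a := ((a : ℕ) : ℝ)) (b := ((m ^ k : ℕ) : ℝ))
    (by positivity) (by positivity) s
  calc ((a * m ^ k : ℕ) : ℂ) ^ s
      = (((a : ℕ) : ℝ) : ℂ) ^ s * (((m ^ k : ℕ) : ℝ) : ℂ) ^ s := by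
        rw [← h]; norm_cast
  _ = (a : ℂ) ^ s * ((m : ℂ) ^ s) ^ k := by
        rw [show (((a : ℕ) : ℝ) : ℂ) = ((a : ℕ) : ℂ) by norm_cast,
          show (((m ^ k : ℕ) : ℝ) : ℂ) = ((m ^ k : ℕ) : ℂ) by norm_cast, natpow_cpow]

/-! ### The product identity -/

theorem lseries_product (hreal : ∀ m : ZMod q, χ m = -1 ∨ χ m = 0 ∨ χ m = 1)
    (hkeven : Even k) (hk1 : 1 ≤ k) {s : ℂ} (hs : 1 < s.re) (hks : 1 < ((k : ℂ) * s).re) :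
    LSeries (fun n : ℕ => χ (n : ZMod q)) s
      = (∑' n : ℕ, LSeries.term (c χ k) s n)
        * LSeries (fun n : ℕ => (1 : DirichletCharacter ℂ q) (n : ZMod q)) ((k : ℂ) * s) := by
  set e : ℕ → ℂ := fun n => (1 : DirichletCharacter ℂ q) (n : ZMod q) with he
  have he1 : ∀ n, ‖e n‖ ≤ 1 := by
    intro n; rw [he]
    by_cases h : IsUnit ((n : ZMod q))
    · simp only [MulChar.one_apply h]; norm_num
    · simp only [MulChar.map_nonunit _ h]; norm_num
  have hsum1 := norm_term_summable (norm_c_le χ k hreal) hs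
  have hsum2 := norm_term_summable he1 hks
  rw [LSeries, LSeries, tsum_mul_tsum_of_summable_norm hsum1 hsum2]
  set g : ℕ × ℕ → ℂ :=
    fun p => LSeries.term (c χ k) s p.1 * LSeries.term e ((k : ℂ) * s) p.2 with hg
  have hsup : ∀ p : ℕ × ℕ, g p ≠ 0 → p.1 ≠ 0 ∧ p.2 ≠ 0
      ∧ (∀ pr : ℕ, pr.Prime → ¬ pr ^ k ∣ p.1)
      ∧ χ ((p.1 : ℕ) : ZMod q) ≠ 0 ∧ IsUnit (((p.2 : ℕ) : ZMod q)) := by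
    rintro ⟨a, m⟩ hp
    have h1 : LSeries.term (c χ k) s a ≠ 0 := left_ne_zero_of_mul hp
    have h2 : LSeries.term e ((k : ℂ) * s) m ≠ 0 := right_ne_zero_of_mul hp
    have ha : a ≠ 0 := by rintro rfl; exact h1 (LSeries.term_zero _ _)
    have hm : m ≠ 0 := by rintro rfl; exact h2 (LSeries.term_zero _ _)
    have hca : c χ k a ≠ 0 := by
      rw [LSeries.term_of_ne_zero ha] at h1
      exact fun h => h1 (by rw [h, zero_div])
    have hem : e m ≠ 0 := by
      rw [LSeries.term_of_ne_zero hm] at h2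
      exact fun h => h2 (by rw [h, zero_div])
    have hunit : IsUnit ((m : ZMod q)) := by
      by_contra h
      exact hem (MulChar.map_nonunit _ h)
    classical
    have hfree : ∀ pr : ℕ, pr.Prime → ¬ pr ^ k ∣ a := by
      by_contra h
      rw [c_apply, if_neg h, zero_mul] at hca
      exact hca rfl
    have hχa : χ ((a : ℕ) : ZMod q) ≠ 0 := by
      intro h
      apply hca
      rw [c_apply, h, mul_zero]
    exact ⟨ha, hm, hfree, hχa, hunit⟩
  refine tsum_eq_tsum_of_ne_zero_bij
    (fun p : Function.support g => (p.1.1 : ℕ) * (p.1.2 : ℕ) ^ k) ?_ ?_ ?_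
  · rintro ⟨⟨a₁, m₁⟩, hx₁⟩ ⟨⟨a₂, m₂⟩, hx₂⟩ heq
    obtain ⟨ha₁, hm₁, hfree₁, -, -⟩ := hsup (a₁, m₁) hx₁
    obtain ⟨ha₂, hm₂, hfree₂, -, -⟩ := hsup (a₂, m₂) hx₂
    obtain ⟨ea, em⟩ := kfree_decomp_unique k hk1 ha₁ hm₁ ha₂ hm₂ hfree₁ hfree₂ heq
    exact Subtype.ext (by simp only [Prod.mk.injEq]; exact ⟨ea, em⟩)
  · intro n hn
    have hn' : LSeries.term (fun n : ℕ => χ (n : ZMod q)) s n ≠ 0 := hn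
    have hn0 : n ≠ 0 := by rintro rfl; exact hn' (LSeries.term_zero _ _)
    have hχn : χ ((n : ℕ) : ZMod q) ≠ 0 := by
      rw [LSeries.term_of_ne_zero hn0] at hn'
      exact fun h => hn' (by rw [h, zero_div])
    obtain ⟨a, m, ha, hm, hnm, hfree⟩ := exists_kfree_decomp k hk1 n hn0
    have hcast : ((n : ℕ) : ZMod q) = ((a : ℕ) : ZMod q) * (((m : ℕ) : ZMod q)) ^ k := by
      rw [hnm]; push_cast; ring
    have hχn' : χ ((a : ℕ) : ZMod q) * (χ ((m : ℕ) : ZMod q)) ^ k ≠ 0 := by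
      rw [← map_pow, ← map_mul, ← hcast]; exact hχn
    have hχa : χ ((a : ℕ) : ZMod q) ≠ 0 := left_ne_zero_of_mul hχn'
    have hχm : χ ((m : ℕ) : ZMod q) ≠ 0 := by
      have h2 := right_ne_zero_of_mul hχn'
      exact fun h => h2 (by rw [h]; exact zero_pow (by omega))
    have hunit : IsUnit (((m : ℕ) : ZMod q)) := by
      by_contra h; exact hχm (χ.map_nonunit h)
    classical
    have hgne : g (a, m) ≠ 0 := by
      apply mul_ne_zero
      · rw [LSeries.term_of_ne_zero ha]
        apply div_ne_zero
        · rw [c_apply, if_pos hfree, one_mul]; exact hχa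
        · intro h
          rw [Complex.cpow_eq_zero_iff] at h
          exact (Nat.cast_ne_zero.mpr ha) h.1
      · rw [LSeries.term_of_ne_zero hm]
        apply div_ne_zero
        · show (1 : DirichletCharacter ℂ q) ((m : ℕ) : ZMod q) ≠ 0
          rw [MulChar.one_apply hunit]; exact one_ne_zero
        · intro h
          rw [Complex.cpow_eq_zero_iff] at h
          exact (Nat.cast_ne_zero.mpr hm) h.1
    exact ⟨⟨(a, m), hgne⟩, hnm.symm⟩
  · rintro ⟨⟨a, m⟩, hx⟩
    have hx' : g (a, m) ≠ 0 := hx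
    obtain ⟨ha, hm, hfree, hχa, hunit⟩ := hsup (a, m) hx'
    have hn0 : a * m ^ k ≠ 0 := Nat.mul_ne_zero ha (pow_ne_zero _ hm)
    show LSeries.term (fun n : ℕ => χ (n : ZMod q)) s (a * m ^ k) = g (a, m)
    rw [hg]
    simp only []
    rw [LSeries.term_of_ne_zero hn0, LSeries.term_of_ne_zero ha, LSeries.term_of_ne_zero hm]
    have hcast : ((a * m ^ k : ℕ) : ZMod q) = ((a : ℕ) : ZMod q) * (((m : ℕ) : ZMod q)) ^ k := by
      push_cast; ring
    rw [hcast, map_mul, map_pow, pow_k_eq_one χ k hreal hkeven hunit, mul_one]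
    rw [decomp_cpow]
    rw [c_apply, if_pos hfree, one_mul]
    simp only [he]
    rw [MulChar.one_apply hunit]
    rw [Complex.cpow_nat_mul]
    rw [div_mul_div_comm, mul_one]

/-! ### The entire function `(s-1)ζ(s)` -/

def Z : ℂ → ℂ := Function.update (fun z : ℂ => (z - 1) * riemannZeta z) 1 1

theorem Z_apply {z : ℂ} (hz : z ≠ 1) : Z z = (z - 1) * riemannZeta z :=
  Function.update_of_ne hz _ _

theorem Z_differentiable : Differentiable ℂ Z := by
  intro z
  have hupd : ∀ w : ℂ, w ≠ 1 → DifferentiableAt ℂ Z w := by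
    intro w hw
    have hev : Z =ᶠ[𝓝 w] fun u : ℂ => (u - 1) * riemannZeta u := by
      filter_upwards [isOpen_compl_singleton.mem_nhds hw] with u hu
      exact Function.update_of_ne hu _ _
    exact DifferentiableAt.congr_of_eventuallyEq
      (((differentiableAt_id.sub_const 1).mul (differentiableAt_riemannZeta hw))) hev
  rcases ne_or_eq z 1 with hz | rfl
  · exact hupd z hz
  · refine (analyticAt_of_differentiable_on_punctured_nhds_of_continuousAt ?_ ?_).differentiableAt
    · filter_upwards [self_mem_nhdsWithin] with w hw
      exact hupd w hw
    · rw [Z, continuousAt_update_same]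
      exact riemannZeta_residue_one

end Stmt19Aux

open scoped Classical in
theorem stmt19 (q : ℕ) [NeZero q] (χ : DirichletCharacter ℂ q) (hχ : χ ≠ 1)
    (hreal : ∀ m : ZMod q, χ m = -1 ∨ χ m = 0 ∨ χ m = 1)
    (k : ℕ) (hk : 2 ≤ k) (hkeven : Even k) (σ : ℝ) (hσ : σ < 1 / (2 * k))
    (hMf : (fun x : ℝ => ∑ n ∈ Icc 1 ⌊x⌋₊,
        (if ∀ p : ℕ, p.Prime → ¬ p ^ k ∣ n then (1:ℂ) else 0) * χ (n : ZMod q)) =O[atTop]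
        fun x : ℝ => x ^ σ) :
    ∃ F : ℂ → ℂ, AnalyticOn ℂ F {s : ℂ | σ < s.re} ∧
      (∀ s : ℂ, 1 < s.re →
        F s = ∑' n : ℕ, (if ∀ p : ℕ, p.Prime → ¬ p ^ k ∣ n then (1:ℂ) else 0) *
          χ (n : ZMod q) / (n : ℂ) ^ s) ∧
      (∀ s : ℂ, σ < s.re → (k : ℂ) * s ≠ 1 → riemannZeta ((k : ℂ) * s) = 0 →
        DirichletCharacter.LFunction χ s = 0) := by
  have hk1 : 1 ≤ k := by omega
  have hk2 : (2:ℝ) ≤ (k:ℝ) := by exact_mod_cast hk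
  have hσ1 : σ < 1 := by
    refine lt_of_lt_of_le hσ ?_
    rw [div_le_one (by nlinarith)]
    nlinarith
  have hO : (Stmt19Aux.M χ k) =O[atTop] (fun x : ℝ => x ^ σ) := hMf
  obtain ⟨C, hC0, hC⟩ :=
    Stmt19Aux.global_bound (fun t ht => Stmt19Aux.norm_M_le χ k hreal ht) hO
  have hUopen : IsOpen {s : ℂ | σ < s.re} := isOpen_lt continuous_const Complex.continuous_re
  have hFdiff : DifferentiableOn ℂ (fun s : ℂ => s * mellin (Stmt19Aux.M χ k) (-s))
      {s : ℂ | σ < s.re} :=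
    Stmt19Aux.F_differentiableOn (fun t ht => Stmt19Aux.M_eq_zero χ k ht)
      (Stmt19Aux.M_locallyIntegrableOn χ k hreal) hO
  refine ⟨fun s : ℂ => s * mellin (Stmt19Aux.M χ k) (-s), hFdiff.analyticOn hUopen, ?_, ?_⟩
  case refine_1 =>
    intro s hs
    have hsσ : σ < s.re := lt_trans hσ1 hs
    show s * mellin (Stmt19Aux.M χ k) (-s) = _
    rw [Stmt19Aux.mellin_eq (Stmt19Aux.M_measurable χ k)
      (fun t ht => Stmt19Aux.M_eq_zero χ k ht) hC hsσ]
    rw [← Stmt19Aux.tsum_term_eq (Stmt19Aux.c_zero χ k) (Stmt19Aux.norm_c_le χ k hreal)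
      (Stmt19Aux.M_eq_Icc0 χ k) hC
      (Stmt19Aux.integrable_aux (Stmt19Aux.M_measurable χ k) hC hsσ) hs hsσ]
    refine tsum_congr fun n => ?_
    rcases Nat.eq_zero_or_pos n with rfl | hn
    · rw [LSeries.term_zero]
      show (0:ℂ) = Stmt19Aux.c χ k 0 / ((0:ℕ) : ℂ) ^ s
      rw [Stmt19Aux.c_zero, zero_div]
    · rw [LSeries.term_of_ne_zero hn.ne']
      rfl
  case refine_2 =>
    -- the functions for the identity-theorem argument
    have hFeq : ∀ s : ℂ, 1 < s.re →
        s * mellin (Stmt19Aux.M χ k) (-s) = ∑' n : ℕ, LSeries.term (Stmt19Aux.c χ k) s n := by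
      intro s hs
      have hsσ : σ < s.re := lt_trans hσ1 hs
      rw [Stmt19Aux.mellin_eq (Stmt19Aux.M_measurable χ k)
        (fun t ht => Stmt19Aux.M_eq_zero χ k ht) hC hsσ]
      exact (Stmt19Aux.tsum_term_eq (Stmt19Aux.c_zero χ k) (Stmt19Aux.norm_c_le χ k hreal)
        (Stmt19Aux.M_eq_Icc0 χ k) hC
        (Stmt19Aux.integrable_aux (Stmt19Aux.M_measurable χ k) hC hsσ) hs hsσ).symm
    have hre : ∀ s : ℂ, ((k:ℂ) * s).re = (k:ℝ) * s.re := by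
      intro s; simp [Complex.mul_re]
    have hAdiff : Differentiable ℂ
        (fun s : ℂ => ((k:ℂ) * s - 1) * DirichletCharacter.LFunction χ s) :=
      (((differentiable_const _).mul differentiable_id).sub_const 1).mul
        (DirichletCharacter.differentiable_LFunction hχ)
    have hPdiff : Differentiable ℂ
        (fun s : ℂ => ∏ p ∈ q.primeFactors, (1 - (p : ℂ) ^ (-((k:ℂ) * s)))) := by
      rw [show (fun s : ℂ => ∏ p ∈ q.primeFactors, (1 - (p : ℂ) ^ (-((k:ℂ) * s))))
          = ∏ p ∈ q.primeFactors, (fun s : ℂ => 1 - (p : ℂ) ^ (-((k:ℂ) * s))) from by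
        ext s; simp [Finset.prod_apply]]
      refine Differentiable.finset_prod fun p hp => ?_
      have hp0 : (p:ℂ) ≠ 0 := Nat.cast_ne_zero.mpr (Nat.pos_of_mem_primeFactors hp).ne'
      exact (differentiable_const 1).sub
        (Differentiable.const_cpow (((differentiable_const _).mul differentiable_id).neg)
          (Or.inl hp0))
    have hZk : Differentiable ℂ (fun s : ℂ => Stmt19Aux.Z ((k:ℂ) * s)) :=
      Stmt19Aux.Z_differentiable.comp ((differentiable_const _).mul differentiable_id)
    have hBdiff : DifferentiableOn ℂ
        (fun s : ℂ => (s * mellin (Stmt19Aux.M χ k) (-s)) *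
          ((∏ p ∈ q.primeFactors, (1 - (p : ℂ) ^ (-((k:ℂ) * s)))) * Stmt19Aux.Z ((k:ℂ) * s)))
        {s : ℂ | σ < s.re} :=
      hFdiff.mul ((hPdiff.mul hZk).differentiableOn)
    have hAB : ∀ s : ℂ, 1 < s.re →
        ((k:ℂ) * s - 1) * DirichletCharacter.LFunction χ s
          = (s * mellin (Stmt19Aux.M χ k) (-s)) *
            ((∏ p ∈ q.primeFactors, (1 - (p : ℂ) ^ (-((k:ℂ) * s)))) *
              Stmt19Aux.Z ((k:ℂ) * s)) := by
      intro s hs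
      have hksre : 1 < ((k:ℂ) * s).re := by rw [hre]; nlinarith
      have hksne : (k:ℂ) * s ≠ 1 := by
        intro h; rw [h] at hksre; simp at hksre
      have hLeq := DirichletCharacter.LFunction_eq_LSeries χ hs
      have hLtriv := DirichletCharacter.LFunction_eq_LSeries (1 : DirichletCharacter ℂ q) hksre
      have hprod := Stmt19Aux.lseries_product χ k hreal hkeven hk1 hs hksre
      have hFs := hFeq s hs
      have hTriv := DirichletCharacter.LFunctionTrivChar_eq_mul_riemannZeta (N := q) hksne
      have hZ := Stmt19Aux.Z_apply hksne
      calc ((k:ℂ) * s - 1) * DirichletCharacter.LFunction χ s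
          = ((k:ℂ) * s - 1) * ((s * mellin (Stmt19Aux.M χ k) (-s)) *
              DirichletCharacter.LFunctionTrivChar q ((k:ℂ) * s)) := by
            rw [hLeq, hprod, ← hFs]
            congr 2
            exact hLtriv.symm
      _ = (s * mellin (Stmt19Aux.M χ k) (-s)) *
            ((∏ p ∈ q.primeFactors, (1 - (p : ℂ) ^ (-((k:ℂ) * s)))) *
              (((k:ℂ) * s - 1) * riemannZeta ((k:ℂ) * s))) := by
            rw [hTriv]; ring
      _ = _ := by rw [hZ]
    have hAan : AnalyticOnNhd ℂ
        (fun s : ℂ => ((k:ℂ) * s - 1) * DirichletCharacter.LFunction χ s) {s : ℂ | σ < s.re} :=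
      (hAdiff.differentiableOn).analyticOnNhd hUopen
    have hBan := hBdiff.analyticOnNhd hUopen
    have hpre : IsPreconnected {s : ℂ | σ < s.re} := (convex_halfSpace_re_gt σ).isPreconnected
    have h2U : (2:ℂ) ∈ {s : ℂ | σ < s.re} := by
      show σ < (2:ℂ).re
      simp only [Complex.re_ofNat]
      linarith
    have hev : (fun s : ℂ => ((k:ℂ) * s - 1) * DirichletCharacter.LFunction χ s)
        =ᶠ[𝓝 (2:ℂ)] (fun s : ℂ => (s * mellin (Stmt19Aux.M χ k) (-s)) *
          ((∏ p ∈ q.primeFactors, (1 - (p : ℂ) ^ (-((k:ℂ) * s)))) *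
            Stmt19Aux.Z ((k:ℂ) * s))) := by
      have hopen : IsOpen {s : ℂ | 1 < s.re} := isOpen_lt continuous_const Complex.continuous_re
      filter_upwards [hopen.mem_nhds
        (by simp only [Set.mem_setOf_eq, Complex.re_ofNat]; norm_num : (2:ℂ) ∈ {s : ℂ | 1 < s.re})]
        with w hw
      exact hAB w hw
    have heqon := hAan.eqOn_of_preconnected_of_eventuallyEq hBan hpre h2U hev
    intro s₀ hs₀ hks₀ hzero
    have h := heqon (show s₀ ∈ {s : ℂ | σ < s.re} from hs₀)
    have hZ0 : Stmt19Aux.Z ((k:ℂ) * s₀) = 0 := by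
      rw [Stmt19Aux.Z_apply hks₀, hzero, mul_zero]
    simp only [hZ0, mul_zero] at h
    rcases mul_eq_zero.mp h with h' | h'
    · exact absurd h' (sub_ne_zero.mpr hks₀)
    · exact h'
end
end
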